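/- arXiv:1802.03410 — 12 statements merged into one kernel-verified Lean document; each statement's English description precedes it below -/
import Mathlib

section
/- Let u, v ∈ ℂ^{S̄⊕S} satisfy M u = λ₀ u and (M − λ₀I) v = u, and suppose there exists c ∈ ℂ with c ≠ −1 such that C (A − λ₀I)⁻¹ u_{S̄} = −c · u_S. Then (R(λ₀) − λ₀I) v_S = (1 + c) · u_S, and moreover (R(λ₀) − λ₀I)² v_S = 0; that is, if additionally u_S ≠ 0, the restriction v_S is a rank-2 generalized eigenvector of the reduced matrix R(λ₀) for the eigenvalue λ₀. -/
open Matrix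

/-- If `M u = l0 u`, `(M - l0 I) v = u`, and `C (A - l0 I)⁻¹ u_{S̄} = -c u_S` with `c ≠ -1`,
then `(R(l0) - l0 I) v_S = (1 + c) u_S`, `(R(l0) - l0 I)² v_S = 0`, and if moreover `u_S ≠ 0`
then `v_S` is a rank-2 generalized eigenvector of `R(l0)` for `l0`. -/
theorem generalized_eigenvector_preserved_of_condition
    {Sbar S : Type*} [Fintype Sbar] [Fintype S] [Nonempty Sbar] [Nonempty S]
    [DecidableEq Sbar] [DecidableEq S]
    (A : Matrix Sbar Sbar ℂ) (B : Matrix Sbar S ℂ) (C : Matrix S Sbar ℂ) (D : Matrix S S ℂ)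
    (l0 : ℂ) (hA : IsUnit (A - l0 • (1 : Matrix Sbar Sbar ℂ)))
    (u v : Sbar ⊕ S → ℂ)
    (hu : (fromBlocks A B C D).mulVec u = l0 • u)
    (hv : (fromBlocks A B C D - l0 • 1).mulVec v = u)
    (c : ℂ) (hc : c ≠ -1)
    (hcond : (C * (A - l0 • (1 : Matrix Sbar Sbar ℂ))⁻¹).mulVec (u ∘ Sum.inl)
      = (-c) • (u ∘ Sum.inr)) :
    (D - C * (A - l0 • (1 : Matrix Sbar Sbar ℂ))⁻¹ * B - l0 • 1).mulVec (v ∘ Sum.inr)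
      = (1 + c) • (u ∘ Sum.inr) ∧
    ((D - C * (A - l0 • (1 : Matrix Sbar Sbar ℂ))⁻¹ * B - l0 • 1)
        * (D - C * (A - l0 • (1 : Matrix Sbar Sbar ℂ))⁻¹ * B - l0 • 1)).mulVec (v ∘ Sum.inr)
      = 0 ∧
    (u ∘ Sum.inr ≠ 0 →
      (D - C * (A - l0 • (1 : Matrix Sbar Sbar ℂ))⁻¹ * B - l0 • 1).mulVec (v ∘ Sum.inr) ≠ 0) := by
  set E := A - l0 • (1 : Matrix Sbar Sbar ℂ) with hE
  set u1 := u ∘ Sum.inl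
  set u2 := u ∘ Sum.inr
  set v1 := v ∘ Sum.inl
  set v2 := v ∘ Sum.inr
  have hEinv : ∀ x : Sbar → ℂ, E⁻¹.mulVec (E.mulVec x) = x := fun x => by
    rw [mulVec_mulVec, nonsing_inv_mul E ((isUnit_iff_isUnit_det E).mp hA), one_mulVec]
  -- block equations for u
  have hu' : Sum.elim (A.mulVec u1 + B.mulVec u2) (C.mulVec u1 + D.mulVec u2) = l0 • u := by
    rw [← fromBlocks_mulVec]; exact hu
  have hu1 : A.mulVec u1 + B.mulVec u2 = l0 • u1 := by
    funext i; exact congrFun hu' (Sum.inl i)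
  have hu2 : C.mulVec u1 + D.mulVec u2 = l0 • u2 := by
    funext i; exact congrFun hu' (Sum.inr i)
  -- block equations for v
  have hv0 : (fromBlocks A B C D).mulVec v - l0 • v = u := by
    rw [← hv, sub_mulVec, smul_mulVec, one_mulVec]
  have hv' : Sum.elim (A.mulVec v1 + B.mulVec v2) (C.mulVec v1 + D.mulVec v2) - l0 • v = u := by
    rw [← fromBlocks_mulVec]; exact hv0
  have hv1 : A.mulVec v1 + B.mulVec v2 - l0 • v1 = u1 := by
    funext i; exact congrFun hv' (Sum.inl i)
  have hv2 : C.mulVec v1 + D.mulVec v2 - l0 • v2 = u2 := by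
    funext i; exact congrFun hv' (Sum.inr i)
  -- E u1 + B u2 = 0
  have hBu : B.mulVec u2 = -(E.mulVec u1) := by
    rw [hE, sub_mulVec, smul_mulVec, one_mulVec]
    rw [← hu1]; abel
  -- E v1 + B v2 = u1
  have hBv : B.mulVec v2 = u1 - E.mulVec v1 := by
    rw [hE, sub_mulVec, smul_mulVec, one_mulVec]
    rw [← hv1]; abel
  -- key term for v
  have hT : (C * E⁻¹ * B).mulVec v2 = (-c) • u2 - C.mulVec v1 := by
    rw [← mulVec_mulVec, ← mulVec_mulVec, hBv, mulVec_sub, hEinv, ← hcond,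
      ← mulVec_mulVec, ← mulVec_sub]
  -- key term for u
  have hTu : (C * E⁻¹ * B).mulVec u2 = -(C.mulVec u1) := by
    rw [← mulVec_mulVec, ← mulVec_mulVec, hBu, mulVec_neg, hEinv, ← mulVec_neg]
  have goal1 : (D - C * E⁻¹ * B - l0 • 1).mulVec v2 = (1 + c) • u2 := by
    rw [sub_mulVec, sub_mulVec, smul_mulVec, one_mulVec, hT, ← hv2]
    funext i
    simp [Pi.smul_apply, smul_eq_mul]
    ring
  have hRu : (D - C * E⁻¹ * B - l0 • 1).mulVec u2 = 0 := by
    rw [sub_mulVec, sub_mulVec, smul_mulVec, one_mulVec, hTu, ← hu2]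
    funext i
    simp [Pi.smul_apply, smul_eq_mul]
    ring
  have h1c : (1 + c) ≠ 0 := by
    intro h; apply hc; linear_combination h
  refine ⟨goal1, ?_, ?_⟩
  · rw [← mulVec_mulVec, goal1, mulVec_smul, hRu, smul_zero]
  · intro hu2ne
    rw [goal1]
    exact smul_ne_zero h1c hu2ne
end

section
/- Let u, v ∈ ℂ^{S̄⊕S} satisfy M u = λ₀ u and (M − λ₀I) v = u, and let c ∈ ℂ. Then (R(λ₀) − λ₀I) v_S = (1 − c) · u_S if and only if C (A − λ₀I)⁻² B u_S = −c · u_S. In particular, the generalized eigenvector is preserved under the isospectral reduction if and only if u_S is an eigenvector of the matrix C (A − λ₀I)⁻² B. -/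
open Matrix

/-- With `M u = l0 u` and `(M - l0 I) v = u`, one has `(R(l0) - l0 I) v_S = (1 - c) u_S`
iff `C (A - l0 I)⁻² B u_S = -c u_S`. -/
theorem generalized_eigenvector_preserved_iff
    {Sbar S : Type*} [Fintype Sbar] [Fintype S] [Nonempty Sbar] [Nonempty S]
    [DecidableEq Sbar] [DecidableEq S]
    (A : Matrix Sbar Sbar ℂ) (B : Matrix Sbar S ℂ) (C : Matrix S Sbar ℂ) (D : Matrix S S ℂ)
    (l0 : ℂ) (hA : IsUnit (A - l0 • (1 : Matrix Sbar Sbar ℂ)))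
    (u v : Sbar ⊕ S → ℂ)
    (hu : (fromBlocks A B C D).mulVec u = l0 • u)
    (hv : (fromBlocks A B C D - l0 • 1).mulVec v = u)
    (c : ℂ) :
    (D - C * (A - l0 • (1 : Matrix Sbar Sbar ℂ))⁻¹ * B - l0 • 1).mulVec (v ∘ Sum.inr)
        = (1 - c) • (u ∘ Sum.inr) ↔
    (C * ((A - l0 • (1 : Matrix Sbar Sbar ℂ))⁻¹ * (A - l0 • (1 : Matrix Sbar Sbar ℂ))⁻¹) * B).mulVec
        (u ∘ Sum.inr) = (-c) • (u ∘ Sum.inr) := by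
  set u1 := u ∘ Sum.inl with hu1d
  set u2 := u ∘ Sum.inr with hu2d
  set v1 := v ∘ Sum.inl with hv1d
  set v2 := v ∘ Sum.inr with hv2d
  set E := A - l0 • (1 : Matrix Sbar Sbar ℂ) with hEd
  have hdet : IsUnit E.det := (Matrix.isUnit_iff_isUnit_det E).mp hA
  have hEinv : E⁻¹ * E = 1 := Matrix.nonsing_inv_mul E hdet
  have hu' : u = Sum.elim u1 u2 := by funext s; cases s <;> rfl
  have hv' : v = Sum.elim v1 v2 := by funext s; cases s <;> rfl
  rw [hu'] at hu hv
  rw [hv'] at hv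
  have hblk : fromBlocks A B C D - l0 • (1 : Matrix (Sbar ⊕ S) (Sbar ⊕ S) ℂ)
      = fromBlocks E B C (D - l0 • 1) := by
    ext i j
    cases i <;> cases j <;>
      simp [hEd, Matrix.fromBlocks, Matrix.one_apply, Sum.elim]
  rw [hblk] at hv
  rw [Matrix.fromBlocks_mulVec] at hu hv
  -- component equations
  have e1 : A.mulVec u1 + B.mulVec u2 = l0 • u1 := by
    funext i; simpa using congrFun hu (Sum.inl i)
  have e2 : E.mulVec v1 + B.mulVec v2 = u1 := by
    funext i; simpa using congrFun hv (Sum.inl i)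
  have e3 : C.mulVec v1 + (D - l0 • 1).mulVec v2 = u2 := by
    funext i; simpa using congrFun hv (Sum.inr i)
  have hE1 : E.mulVec u1 = -(B.mulVec u2) := by
    have : E.mulVec u1 = A.mulVec u1 - l0 • u1 := by
      rw [hEd, Matrix.sub_mulVec, Matrix.smul_mulVec, Matrix.one_mulVec]
    rw [this, ← e1]; abel
  have hu1 : u1 = -(E⁻¹.mulVec (B.mulVec u2)) := by
    have := congrArg (fun w => E⁻¹.mulVec w) hE1
    simpa [Matrix.mulVec_mulVec, hEinv, Matrix.one_mulVec, Matrix.mulVec_neg] using this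
  have hv1 : v1 = E⁻¹.mulVec u1 - E⁻¹.mulVec (B.mulVec v2) := by
    have := congrArg (fun w => E⁻¹.mulVec w) e2
    simpa [Matrix.mulVec_add, Matrix.mulVec_mulVec, hEinv, Matrix.one_mulVec,
      eq_sub_iff_add_eq] using this
  have key : (D - C * E⁻¹ * B - l0 • 1).mulVec v2
      = u2 + (C * (E⁻¹ * E⁻¹) * B).mulVec u2 := by
    have lhs : (D - C * E⁻¹ * B - l0 • 1).mulVec v2
        = (D - l0 • 1).mulVec v2 - C.mulVec (E⁻¹.mulVec (B.mulVec v2)) := by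
      rw [show (D - C * E⁻¹ * B - l0 • 1) = (D - l0 • 1) - C * E⁻¹ * B by abel,
        Matrix.sub_mulVec, ← Matrix.mulVec_mulVec, ← Matrix.mulVec_mulVec]
    rw [lhs]
    have h3 : (D - l0 • 1).mulVec v2 = u2 - C.mulVec v1 := by
      rw [← e3]; abel
    rw [h3, hv1]
    rw [Matrix.mulVec_sub, hu1]
    simp only [Matrix.mulVec_neg, ← Matrix.mulVec_mulVec]
    abel
  rw [key, sub_smul, one_smul, sub_eq_add_neg, ← neg_smul]
  exact add_right_inj u2
end

section
/- Suppose a vector w ∈ ℂ^S satisfies R(λ₀) w = λ₀ w. Define u ∈ ℂ^{S̄⊕S} by u_S = w and u_{S̄} = −(A − λ₀I)⁻¹ B w. Then M u = λ₀ u; that is, every eigenvector of the reduced matrix R(λ₀) for λ₀ is the restriction to S of an eigenvector of M for λ₀. -/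
open Matrix

/-- Every eigenvector `w` of the reduced matrix `R(l0)` for `l0` extends (by
`u_{S̄} = -(A - l0 I)⁻¹ B w`) to an eigenvector of `M` for `l0`. -/
theorem eigenvector_of_reduction_extends
    {Sbar S : Type*} [Fintype Sbar] [Fintype S] [Nonempty Sbar] [Nonempty S]
    [DecidableEq Sbar] [DecidableEq S]
    (A : Matrix Sbar Sbar ℂ) (B : Matrix Sbar S ℂ) (C : Matrix S Sbar ℂ) (D : Matrix S S ℂ)
    (l0 : ℂ) (hA : IsUnit (A - l0 • (1 : Matrix Sbar Sbar ℂ)))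
    (w : S → ℂ)
    (hw : (D - C * (A - l0 • (1 : Matrix Sbar Sbar ℂ))⁻¹ * B).mulVec w = l0 • w) :
    (fromBlocks A B C D).mulVec
        (Sum.elim (-(((A - l0 • (1 : Matrix Sbar Sbar ℂ))⁻¹ * B).mulVec w)) w)
      = l0 • Sum.elim (-(((A - l0 • (1 : Matrix Sbar Sbar ℂ))⁻¹ * B).mulVec w)) w := by
  set E := A - l0 • (1 : Matrix Sbar Sbar ℂ) with hE
  have hEinv : E * E⁻¹ = 1 := mul_nonsing_inv E ((isUnit_iff_isUnit_det E).mp hA)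
  have hA' : A = E + l0 • 1 := by rw [hE, sub_add_cancel]
  have h1 : A.mulVec (-((E⁻¹ * B).mulVec w)) + B.mulVec w
      = l0 • (-((E⁻¹ * B).mulVec w)) := by
    rw [hA']
    have key : E *ᵥ (E⁻¹ *ᵥ (B *ᵥ w)) = B *ᵥ w := by
      rw [mulVec_mulVec, hEinv, one_mulVec]
    simp only [add_mulVec, mulVec_neg, smul_mulVec, one_mulVec, ← mulVec_mulVec]
    rw [key]
    module
  have h2 : C.mulVec (-((E⁻¹ * B).mulVec w)) + D.mulVec w = l0 • w := by
    rw [← hw]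
    simp only [mulVec_neg, ← mulVec_mulVec, sub_mulVec]
    abel
  funext i
  cases i with
  | inl i =>
    simpa [fromBlocks_mulVec] using congrFun h1 i
  | inr i =>
    simpa [fromBlocks_mulVec] using congrFun h2 i
end

section
/- The restriction map u ↦ u_S is a bijection from the eigenspace {u ∈ ℂ^{S̄⊕S} : M u = λ₀ u} of M for λ₀ onto the eigenspace {w ∈ ℂ^S : R(λ₀) w = λ₀ w} of the reduced matrix R(λ₀) for λ₀. -/
open Matrix

/-- The restriction map `u ↦ u_S` is a bijection from the `l0`-eigenspace of `M` onto the
`l0`-eigenspace of the reduced matrix `R(l0)`. -/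
theorem restriction_bijOn_eigenspaces
    {Sbar S : Type*} [Fintype Sbar] [Fintype S] [Nonempty Sbar] [Nonempty S]
    [DecidableEq Sbar] [DecidableEq S]
    (A : Matrix Sbar Sbar ℂ) (B : Matrix Sbar S ℂ) (C : Matrix S Sbar ℂ) (D : Matrix S S ℂ)
    (l0 : ℂ) (hA : IsUnit (A - l0 • (1 : Matrix Sbar Sbar ℂ))) :
    Set.BijOn (fun u : Sbar ⊕ S → ℂ => u ∘ Sum.inr)
      {u | (fromBlocks A B C D).mulVec u = l0 • u}
      {w | (D - C * (A - l0 • (1 : Matrix Sbar Sbar ℂ))⁻¹ * B).mulVec w = l0 • w} := by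
  set E : Matrix Sbar Sbar ℂ := A - l0 • (1 : Matrix Sbar Sbar ℂ) with hE
  have hdet : IsUnit E.det := (Matrix.isUnit_iff_isUnit_det E).mp hA
  have hEinv : E⁻¹ * E = 1 := Matrix.nonsing_inv_mul E hdet
  have hEinv' : E * E⁻¹ = 1 := Matrix.mul_nonsing_inv E hdet
  have key : ∀ u : Sbar ⊕ S → ℂ,
      (fromBlocks A B C D).mulVec u = l0 • u ↔
      (A.mulVec (u ∘ Sum.inl) + B.mulVec (u ∘ Sum.inr) = l0 • (u ∘ Sum.inl) ∧
       C.mulVec (u ∘ Sum.inl) + D.mulVec (u ∘ Sum.inr) = l0 • (u ∘ Sum.inr)) := by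
    intro u
    have hu : u = Sum.elim (u ∘ Sum.inl) (u ∘ Sum.inr) := (Sum.elim_comp_inl_inr u).symm
    have hsplit : (fromBlocks A B C D).mulVec u =
        Sum.elim (A.mulVec (u ∘ Sum.inl) + B.mulVec (u ∘ Sum.inr))
          (C.mulVec (u ∘ Sum.inl) + D.mulVec (u ∘ Sum.inr)) := by
      conv_lhs => rw [hu]
      rw [Matrix.fromBlocks_mulVec]
      simp [Sum.elim_comp_inl, Sum.elim_comp_inr]
    have hsm : l0 • u = Sum.elim (l0 • (u ∘ Sum.inl)) (l0 • (u ∘ Sum.inr)) := by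
      funext i; cases i <;> simp
    rw [hsplit, hsm]
    constructor
    · intro h
      exact ⟨funext fun i => congrFun h (Sum.inl i), funext fun i => congrFun h (Sum.inr i)⟩
    · rintro ⟨h1, h2⟩
      funext i; cases i <;> simp [h1, h2]
  have top : ∀ u : Sbar ⊕ S → ℂ,
      A.mulVec (u ∘ Sum.inl) + B.mulVec (u ∘ Sum.inr) = l0 • (u ∘ Sum.inl) →
      u ∘ Sum.inl = -(E⁻¹.mulVec (B.mulVec (u ∘ Sum.inr))) := by
    intro u h1
    have hEx : E.mulVec (u ∘ Sum.inl) = -(B.mulVec (u ∘ Sum.inr)) := by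
      rw [hE, Matrix.sub_mulVec, Matrix.smul_mulVec, Matrix.one_mulVec]
      rw [← h1]
      abel
    calc u ∘ Sum.inl = (E⁻¹ * E).mulVec (u ∘ Sum.inl) := by rw [hEinv, Matrix.one_mulVec]
      _ = E⁻¹.mulVec (E.mulVec (u ∘ Sum.inl)) := by rw [← Matrix.mulVec_mulVec]
      _ = -(E⁻¹.mulVec (B.mulVec (u ∘ Sum.inr))) := by rw [hEx, Matrix.mulVec_neg]
  constructor
  · -- MapsTo
    intro u hu
    obtain ⟨h1, h2⟩ := (key u).mp hu
    have hx := top u h1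
    show (D - C * E⁻¹ * B).mulVec (u ∘ Sum.inr) = l0 • (u ∘ Sum.inr)
    rw [Matrix.sub_mulVec, ← h2, hx]
    rw [Matrix.mulVec_neg, ← Matrix.mulVec_mulVec, ← Matrix.mulVec_mulVec]
    abel
  constructor
  · -- InjOn
    intro u hu v hv huv
    have huv' : u ∘ Sum.inr = v ∘ Sum.inr := huv
    obtain ⟨hu1, _⟩ := (key u).mp hu
    obtain ⟨hv1, _⟩ := (key v).mp hv
    have hxu := top u hu1
    have hxv := top v hv1
    funext i
    cases i with
    | inl i =>
      have : u ∘ Sum.inl = v ∘ Sum.inl := by rw [hxu, hxv, huv']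
      exact congrFun this i
    | inr i => exact congrFun huv' i
  · -- SurjOn
    intro w hw
    refine ⟨Sum.elim (-(E⁻¹.mulVec (B.mulVec w))) w, ?_, by funext i; simp⟩
    have hrest : (Sum.elim (-(E⁻¹.mulVec (B.mulVec w))) w : Sbar ⊕ S → ℂ) ∘ Sum.inr = w := by
      funext i; simp
    have htop : (Sum.elim (-(E⁻¹.mulVec (B.mulVec w))) w : Sbar ⊕ S → ℂ) ∘ Sum.inl
        = -(E⁻¹.mulVec (B.mulVec w)) := by funext i; simp
    rw [Set.mem_setOf_eq, key, hrest, htop]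
    constructor
    · have hA' : A = E + l0 • (1 : Matrix Sbar Sbar ℂ) := by rw [hE]; abel
      rw [hA', Matrix.add_mulVec, Matrix.mulVec_neg, Matrix.mulVec_mulVec, hEinv',
        Matrix.one_mulVec, Matrix.smul_mulVec, Matrix.one_mulVec]
      simp [Matrix.mulVec_neg]
    · have hw' : (D - C * E⁻¹ * B).mulVec w = l0 • w := hw
      rw [Matrix.sub_mulVec] at hw'
      rw [← hw', ← Matrix.mulVec_mulVec, ← Matrix.mulVec_mulVec, Matrix.mulVec_neg]
      abel
end

section
/- Let M be a complex matrix indexed by S̄ ⊕ S with blocks A, B, C, D, and regard its entries as elements of the field K = RatFunc ℂ of rational functions, with X the variable. Then the matrix A − X·I is invertible over K (its determinant is a nonzero element of K), and the determinant identity det(M − X·I) = det(A − X·I) · det(D − X·I − C (A − X·I)⁻¹ B) holds in K. Consequently, the spectrum (with multiplicities) of the isospectral reduction of M to S equals the spectrum of M minus the spectrum of A = M_{S̄S̄}. -/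
open Matrix Polynomial

set_option synthInstance.maxHeartbeats 1000000
set_option maxHeartbeats 2000000

private lemma rm_gcd (a : ℂ) {p q : ℂ[X]} (hp : p ≠ 0) (hq : q ≠ 0) :
    rootMultiplicity a (gcd p q)
      = min (rootMultiplicity a p) (rootMultiplicity a q) := by
  have hg : gcd p q ≠ 0 := fun h => hp ((gcd_eq_zero_iff p q).mp h).1
  refine le_antisymm (le_min ?_ ?_) ?_
  · exact (le_rootMultiplicity_iff hp).mpr
      ((pow_rootMultiplicity_dvd _ a).trans (gcd_dvd_left p q))
  · exact (le_rootMultiplicity_iff hq).mpr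
      ((pow_rootMultiplicity_dvd _ a).trans (gcd_dvd_right p q))
  · refine (le_rootMultiplicity_iff hg).mpr (dvd_gcd ?_ ?_)
    · exact dvd_trans (pow_dvd_pow _ (min_le_left _ _)) (pow_rootMultiplicity_dvd p a)
    · exact dvd_trans (pow_dvd_pow _ (min_le_right _ _)) (pow_rootMultiplicity_dvd q a)

private lemma rm_div (a : ℂ) (p : ℂ[X]) {q : ℂ[X]} (hq : q ≠ 0) :
    rootMultiplicity a ((algebraMap ℂ[X] (RatFunc ℂ) p / algebraMap ℂ[X] (RatFunc ℂ) q).num)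
      = rootMultiplicity a p - rootMultiplicity a q := by
  by_cases hp : p = 0
  · simp [hp]
  · rw [RatFunc.num_div]
    set g := gcd p q with hgdef
    have hg : g ≠ 0 := fun h => hp ((gcd_eq_zero_iff p q).mp h).1
    have hgp : g ∣ p := gcd_dvd_left p q
    have hgq : g ∣ q := gcd_dvd_right p q
    have hpg : p / g ≠ 0 := by
      intro h
      exact hp (by rw [← EuclideanDomain.mul_div_cancel' hg hgp, h, mul_zero])
    have hqg : q / g ≠ 0 := by
      intro h
      exact hq (by rw [← EuclideanDomain.mul_div_cancel' hg hgq, h, mul_zero])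
    have hc : (Polynomial.C ((q / g).leadingCoeff)⁻¹ : ℂ[X]) ≠ 0 := by
      simp [Polynomial.leadingCoeff_ne_zero.mpr hqg]
    rw [Polynomial.rootMultiplicity_mul (mul_ne_zero hc hpg), Polynomial.rootMultiplicity_C,
      zero_add]
    have key : rootMultiplicity a p = rootMultiplicity a g + rootMultiplicity a (p / g) := by
      conv_lhs => rw [← EuclideanDomain.mul_div_cancel' hg hgp]
      exact Polynomial.rootMultiplicity_mul (by
        rw [EuclideanDomain.mul_div_cancel' hg hgp]; exact hp)
    have hming := rm_gcd a hp hq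
    rw [hming] at key
    omega

private lemma matmap (n : Type*) [Fintype n] [DecidableEq n] (A : Matrix n n ℂ) :
    (A.map (Polynomial.C : ℂ →+* ℂ[X])
        - (Polynomial.X : ℂ[X]) • (1 : Matrix n n ℂ[X])).map (algebraMap ℂ[X] (RatFunc ℂ))
      = A.map (RatFunc.C : ℂ →+* RatFunc ℂ)
        - (RatFunc.X : RatFunc ℂ) • (1 : Matrix n n (RatFunc ℂ)) := by
  ext i j
  by_cases h : i = j <;>
    simp [Matrix.map_apply, Matrix.sub_apply, Matrix.smul_apply, Matrix.one_apply, h,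
      RatFunc.algebraMap_C, RatFunc.algebraMap_X]

private lemma detzero (n : Type*) [Fintype n] [DecidableEq n] (A : Matrix n n ℂ) :
    (A.map (Polynomial.C : ℂ →+* ℂ[X])
        - (Polynomial.X : ℂ[X]) • (1 : Matrix n n ℂ[X])).det ≠ 0 := by
  have h1 : A.map (Polynomial.C : ℂ →+* ℂ[X]) - (Polynomial.X : ℂ[X]) • (1 : Matrix n n ℂ[X])
      = -(charmatrix A) := by
    ext i j
    by_cases h : i = j <;>
      simp [charmatrix, Matrix.sub_apply, Matrix.smul_apply, Matrix.one_apply, h,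
        Matrix.diagonal_apply, Matrix.map_apply]
  rw [h1, Matrix.det_neg]
  have := A.charpoly_monic.ne_zero
  simp only [Matrix.charpoly] at this
  intro h
  rcases mul_eq_zero.mp h with h | h
  · exact pow_ne_zero _ (by norm_num : (-1 : ℂ[X]) ≠ 0) h
  · exact this h

/-- Over `K = RatFunc ℂ`, the matrix `A - X I` is invertible, the determinant identity
`det(M - X I) = det(A - X I) · det(D - X I - C (A - X I)⁻¹ B)` holds, and consequently the
multiplicity of any `l0` in the spectrum of the isospectral reduction of `M` to `S` equals
its multiplicity in `σ(M)` minus its multiplicity in `σ(A)` (truncated subtraction, as in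
the difference of multisets). -/
theorem det_identity_and_spectrum_of_reduction
    {Sbar S : Type*} [Fintype Sbar] [Fintype S] [Nonempty Sbar] [Nonempty S]
    [DecidableEq Sbar] [DecidableEq S]
    (A : Matrix Sbar Sbar ℂ) (B : Matrix Sbar S ℂ) (C : Matrix S Sbar ℂ) (D : Matrix S S ℂ) :
    (A.map (RatFunc.C : ℂ →+* RatFunc ℂ)
        - (RatFunc.X : RatFunc ℂ) • (1 : Matrix Sbar Sbar (RatFunc ℂ))).det ≠ 0 ∧
    (((fromBlocks A B C D).map (RatFunc.C : ℂ →+* RatFunc ℂ))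
        - (RatFunc.X : RatFunc ℂ) • (1 : Matrix (Sbar ⊕ S) (Sbar ⊕ S) (RatFunc ℂ))).det =
      (A.map (RatFunc.C : ℂ →+* RatFunc ℂ)
          - (RatFunc.X : RatFunc ℂ) • (1 : Matrix Sbar Sbar (RatFunc ℂ))).det *
        (D.map (RatFunc.C : ℂ →+* RatFunc ℂ)
            - (RatFunc.X : RatFunc ℂ) • (1 : Matrix S S (RatFunc ℂ))
          - C.map (RatFunc.C : ℂ →+* RatFunc ℂ)
            * (A.map (RatFunc.C : ℂ →+* RatFunc ℂ)
                - (RatFunc.X : RatFunc ℂ) • (1 : Matrix Sbar Sbar (RatFunc ℂ)))⁻¹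
            * B.map (RatFunc.C : ℂ →+* RatFunc ℂ)).det ∧
    ∀ l0 : ℂ,
      Polynomial.rootMultiplicity l0
        ((D.map (RatFunc.C : ℂ →+* RatFunc ℂ)
            - (RatFunc.X : RatFunc ℂ) • (1 : Matrix S S (RatFunc ℂ))
          - C.map (RatFunc.C : ℂ →+* RatFunc ℂ)
            * (A.map (RatFunc.C : ℂ →+* RatFunc ℂ)
                - (RatFunc.X : RatFunc ℂ) • (1 : Matrix Sbar Sbar (RatFunc ℂ)))⁻¹
            * B.map (RatFunc.C : ℂ →+* RatFunc ℂ)).det).num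
      = Polynomial.rootMultiplicity l0
          (((fromBlocks A B C D).map (Polynomial.C : ℂ →+* Polynomial ℂ)
            - (Polynomial.X : Polynomial ℂ)
              • (1 : Matrix (Sbar ⊕ S) (Sbar ⊕ S) (Polynomial ℂ))).det)
        - Polynomial.rootMultiplicity l0
          ((A.map (Polynomial.C : ℂ →+* Polynomial ℂ)
            - (Polynomial.X : Polynomial ℂ)
              • (1 : Matrix Sbar Sbar (Polynomial ℂ))).det) := by
  set φ := algebraMap ℂ[X] (RatFunc ℂ)
  set pA := A.map (Polynomial.C : ℂ →+* ℂ[X])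
      - (Polynomial.X : ℂ[X]) • (1 : Matrix Sbar Sbar ℂ[X]) with hpA
  set pM := (fromBlocks A B C D).map (Polynomial.C : ℂ →+* ℂ[X])
      - (Polynomial.X : ℂ[X]) • (1 : Matrix (Sbar ⊕ S) (Sbar ⊕ S) ℂ[X]) with hpM
  set A' := A.map (RatFunc.C : ℂ →+* RatFunc ℂ)
      - (RatFunc.X : RatFunc ℂ) • (1 : Matrix Sbar Sbar (RatFunc ℂ)) with hA'
  set D' := D.map (RatFunc.C : ℂ →+* RatFunc ℂ)
      - (RatFunc.X : RatFunc ℂ) • (1 : Matrix S S (RatFunc ℂ)) with hD'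
  set M' := (fromBlocks A B C D).map (RatFunc.C : ℂ →+* RatFunc ℂ)
      - (RatFunc.X : RatFunc ℂ) • (1 : Matrix (Sbar ⊕ S) (Sbar ⊕ S) (RatFunc ℂ)) with hM'
  have hdetA : A'.det = φ pA.det := by
    rw [hA', hpA, ← matmap, ← RingHom.mapMatrix_apply, ← RingHom.map_det]
  have hdetM : M'.det = φ pM.det := by
    rw [hM', hpM, ← matmap, ← RingHom.mapMatrix_apply, ← RingHom.map_det]
  have hpAne : pA.det ≠ 0 := hpA ▸ detzero _ A
  have hAne : A'.det ≠ 0 := by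
    rw [hdetA]
    intro h
    apply hpAne
    have h2 : φ pA.det = φ 0 := by simpa using h
    exact RatFunc.algebraMap_injective ℂ h2
  have hblocks : M' = fromBlocks A' (B.map (RatFunc.C : ℂ →+* RatFunc ℂ))
      (C.map (RatFunc.C : ℂ →+* RatFunc ℂ)) D' := by
    rw [hM', Matrix.fromBlocks_map, ← Matrix.fromBlocks_one, Matrix.fromBlocks_smul, hA', hD']
    ext (i | i) (j | j) <;> simp [Matrix.fromBlocks, Matrix.sub_apply]
  haveI : Invertible A' := A'.invertibleOfIsUnitDet (isUnit_iff_ne_zero.mpr hAne)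
  have hdet2 : M'.det = A'.det *
      (D' - C.map (RatFunc.C : ℂ →+* RatFunc ℂ) * A'⁻¹
        * B.map (RatFunc.C : ℂ →+* RatFunc ℂ)).det := by
    rw [hblocks, Matrix.det_fromBlocks₁₁, Matrix.invOf_eq_nonsing_inv]
  refine ⟨hAne, hdet2, fun l0 => ?_⟩
  have hr : (D' - C.map (RatFunc.C : ℂ →+* RatFunc ℂ) * A'⁻¹
      * B.map (RatFunc.C : ℂ →+* RatFunc ℂ)).det = φ pM.det / φ pA.det := by
    rw [eq_div_iff (hdetA ▸ hAne), ← hdetM, hdet2, hdetA, mul_comm]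
  rw [hr, rm_div l0 pM.det hpAne, hpA, hpM]
end

section
/- Suppose det(A − λ₀I) ≠ 0. Let f ∈ RatFunc ℂ be the rational function f = det(D − X·I − C (A − X·I)⁻¹ B) (the characteristic determinant of the isospectral reduction of M to S). Then the multiplicity of λ₀ as a root of the characteristic polynomial det(M − X·I) ∈ ℂ[X] equals the multiplicity of λ₀ as a root of the numerator polynomial of f; that is, the algebraic multiplicity of λ₀ is preserved under the isospectral reduction. -/
open Matrix

set_option synthInstance.maxHeartbeats 1000000
set_option maxHeartbeats 2000000

private lemma map_smul_one_aux {R S n : Type*} [CommRing R] [CommRing S] [Fintype n]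
    [DecidableEq n] (g : R →+* S) (x : R) :
    ((x • (1 : Matrix n n R)).map g) = g x • (1 : Matrix n n S) := by
  ext i j
  by_cases h : i = j <;> simp [Matrix.one_apply, h]

/-- If `det(A - l0 I) ≠ 0`, the multiplicity of `l0` as a root of `det(M - X I) ∈ ℂ[X]`
equals its multiplicity as a root of the numerator of the rational function
`det(D - X I - C (A - X I)⁻¹ B)`: the algebraic multiplicity of `l0` is preserved. -/
theorem algebraic_multiplicity_preserved
    {Sbar S : Type*} [Fintype Sbar] [Fintype S] [Nonempty Sbar] [Nonempty S]
    [DecidableEq Sbar] [DecidableEq S]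
    (A : Matrix Sbar Sbar ℂ) (B : Matrix Sbar S ℂ) (C : Matrix S Sbar ℂ) (D : Matrix S S ℂ)
    (l0 : ℂ) (hA : (A - l0 • (1 : Matrix Sbar Sbar ℂ)).det ≠ 0) :
    Polynomial.rootMultiplicity l0
      (((fromBlocks A B C D).map (Polynomial.C : ℂ →+* Polynomial ℂ)
        - (Polynomial.X : Polynomial ℂ)
          • (1 : Matrix (Sbar ⊕ S) (Sbar ⊕ S) (Polynomial ℂ))).det)
    = Polynomial.rootMultiplicity l0
      (((D.map (RatFunc.C : ℂ →+* RatFunc ℂ)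
          - (RatFunc.X : RatFunc ℂ) • (1 : Matrix S S (RatFunc ℂ))
        - C.map (RatFunc.C : ℂ →+* RatFunc ℂ)
          * (A.map (RatFunc.C : ℂ →+* RatFunc ℂ)
              - (RatFunc.X : RatFunc ℂ) • (1 : Matrix Sbar Sbar (RatFunc ℂ)))⁻¹
          * B.map (RatFunc.C : ℂ →+* RatFunc ℂ)).det).num) := by
  classical
  set φ : Polynomial ℂ →+* RatFunc ℂ := algebraMap (Polynomial ℂ) (RatFunc ℂ) with hφ
  have hφinj : Function.Injective φ := IsFractionRing.injective _ _
  set P : Polynomial ℂ :=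
    ((fromBlocks A B C D).map (Polynomial.C : ℂ →+* Polynomial ℂ)
        - (Polynomial.X : Polynomial ℂ)
          • (1 : Matrix (Sbar ⊕ S) (Sbar ⊕ S) (Polynomial ℂ))).det with hP
  set Q : Polynomial ℂ :=
    (A.map (Polynomial.C : ℂ →+* Polynomial ℂ)
        - (Polynomial.X : Polynomial ℂ) • (1 : Matrix Sbar Sbar (Polynomial ℂ))).det with hQ
  set A' := A.map (RatFunc.C : ℂ →+* RatFunc ℂ) with hA'
  set B' := B.map (RatFunc.C : ℂ →+* RatFunc ℂ) with hB'
  set C' := C.map (RatFunc.C : ℂ →+* RatFunc ℂ) with hC'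
  set D' := D.map (RatFunc.C : ℂ →+* RatFunc ℂ) with hD'
  set f : RatFunc ℂ :=
    (D' - (RatFunc.X : RatFunc ℂ) • (1 : Matrix S S (RatFunc ℂ))
      - C' * (A' - (RatFunc.X : RatFunc ℂ) • (1 : Matrix Sbar Sbar (RatFunc ℂ)))⁻¹ * B').det
    with hf
  -- evaluation of Q at l0
  have hmA0 : (A.map (Polynomial.C : ℂ →+* Polynomial ℂ)
      - (Polynomial.X : Polynomial ℂ) • (1 : Matrix Sbar Sbar (Polynomial ℂ))).map
        (Polynomial.evalRingHom l0) = A - l0 • (1 : Matrix Sbar Sbar ℂ) := by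
    rw [Matrix.map_sub _ (fun a b => map_sub _ a b), Matrix.map_map, map_smul_one_aux]
    congr 1
    · ext i j; simp
    · simp
  have hQeval : Q.eval l0 = (A - l0 • (1 : Matrix Sbar Sbar ℂ)).det := by
    have h := RingHom.map_det (Polynomial.evalRingHom l0)
      (A.map (Polynomial.C : ℂ →+* Polynomial ℂ)
        - (Polynomial.X : Polynomial ℂ) • (1 : Matrix Sbar Sbar (Polynomial ℂ)))
    rw [RingHom.mapMatrix_apply, hmA0] at h
    simpa using h
  have hQeval0 : Q.eval l0 ≠ 0 := by rw [hQeval]; exact hA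
  have hQ0 : Q ≠ 0 := fun h => hQeval0 (by simp [h])
  have hφQ0 : φ Q ≠ 0 := fun h => hQ0 (hφinj (by simpa using h))
  -- the mapped A-block
  have hmapA : (A.map (Polynomial.C : ℂ →+* Polynomial ℂ)
      - (Polynomial.X : Polynomial ℂ) • (1 : Matrix Sbar Sbar (Polynomial ℂ))).map φ
      = A' - (RatFunc.X : RatFunc ℂ) • (1 : Matrix Sbar Sbar (RatFunc ℂ)) := by
    ext i j
    simp [Matrix.map_apply, Matrix.sub_apply, Matrix.smul_apply, Matrix.one_apply,
      apply_ite, RatFunc.algebraMap_C, RatFunc.algebraMap_X, hφ, hA']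
    split_ifs <;> simp_all
  have hdetA' : (A' - (RatFunc.X : RatFunc ℂ) • (1 : Matrix Sbar Sbar (RatFunc ℂ))).det = φ Q := by
    rw [hQ, RingHom.map_det, RingHom.mapMatrix_apply, hmapA]
  have hunit : IsUnit (A' - (RatFunc.X : RatFunc ℂ) • (1 : Matrix Sbar Sbar (RatFunc ℂ))).det := by
    rw [hdetA']; exact isUnit_iff_ne_zero.2 hφQ0
  haveI := (A' - (RatFunc.X : RatFunc ℂ)
    • (1 : Matrix Sbar Sbar (RatFunc ℂ))).invertibleOfIsUnitDet hunit
  -- block decomposition of the mapped big matrix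
  have hmapM : (((fromBlocks A B C D).map (Polynomial.C : ℂ →+* Polynomial ℂ)
        - (Polynomial.X : Polynomial ℂ)
          • (1 : Matrix (Sbar ⊕ S) (Sbar ⊕ S) (Polynomial ℂ)))).map φ
      = fromBlocks (A' - (RatFunc.X : RatFunc ℂ) • 1) B' C'
          (D' - (RatFunc.X : RatFunc ℂ) • 1) := by
    ext (i|i) (j|j) <;>
      simp [Matrix.map_apply, fromBlocks, Matrix.one_apply, Matrix.sub_apply,
        Matrix.smul_apply, RatFunc.algebraMap_C, RatFunc.algebraMap_X, hφ, hA', hB', hC', hD',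
        apply_ite] <;>
      split_ifs <;> simp_all
  -- Schur complement identity: φ P = φ Q * f
  have hSchur : φ P = φ Q * f := by
    rw [hP, RingHom.map_det, RingHom.mapMatrix_apply, hmapM, Matrix.det_fromBlocks₁₁, hdetA', hf,
      Matrix.invOf_eq_nonsing_inv]
  by_cases hP0 : P = 0
  · have hf0 : f = 0 := by
      have h0 : φ Q * f = 0 := by rw [← hSchur, hP0, map_zero]
      exact (mul_eq_zero.1 h0).resolve_left hφQ0
    rw [hP0, hf0]
    simp
  · have hφP0 : φ P ≠ 0 := fun h => hP0 (hφinj (by simpa using h))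
    have hf0 : f ≠ 0 := fun h => hφP0 (by rw [hSchur, h, mul_zero])
    have hnum0 : f.num ≠ 0 := RatFunc.num_ne_zero hf0
    have hden0 : f.denom ≠ 0 := f.denom_ne_zero
    have hφden0 : φ f.denom ≠ 0 := fun h => hden0 (hφinj (by simpa using h))
    have h1 : φ f.num = f * φ f.denom := (div_eq_iff hφden0).1 (RatFunc.num_div_denom f)
    -- the key polynomial identity
    have hkey : f.num * Q = f.denom * P := by
      apply hφinj
      rw [_root_.map_mul, _root_.map_mul, h1, hSchur]
      ring
    -- root multiplicities
    have hmulQ : Polynomial.rootMultiplicity l0 Q = 0 :=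
      Polynomial.rootMultiplicity_eq_zero (by simpa [Polynomial.IsRoot] using hQeval0)
    have hdvd : f.denom ∣ Q := by
      have hco : IsCoprime f.denom f.num := (RatFunc.isCoprime_num_denom f).symm
      exact hco.dvd_of_dvd_mul_right ⟨P, by rw [← hkey]; ring⟩
    have hdeneval : f.denom.eval l0 ≠ 0 := by
      obtain ⟨c, hc⟩ := hdvd
      intro h
      apply hQeval0
      rw [hc, Polynomial.eval_mul, h, zero_mul]
    have hmulden : Polynomial.rootMultiplicity l0 f.denom = 0 :=
      Polynomial.rootMultiplicity_eq_zero (by simpa [Polynomial.IsRoot] using hdeneval)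
    have h2 : Polynomial.rootMultiplicity l0 (f.num * Q)
        = Polynomial.rootMultiplicity l0 (f.denom * P) := by rw [hkey]
    rw [Polynomial.rootMultiplicity_mul (mul_ne_zero hnum0 hQ0),
      Polynomial.rootMultiplicity_mul (mul_ne_zero hden0 hP0), hmulQ, hmulden] at h2
    omega
end

section
/- Suppose det(A − λ₀I) ≠ 0. Then the geometric multiplicity of λ₀ is preserved under isospectral reduction: the dimension over ℂ of the kernel of M − λ₀I equals the dimension over ℂ of the kernel of R(λ₀) − λ₀I. -/
open Matrix

/-- The geometric multiplicity of `l0` is preserved under isospectral reduction: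
`dim ker (M - l0 I) = dim ker (R(l0) - l0 I)`. -/
theorem geometric_multiplicity_preserved
    {Sbar S : Type*} [Fintype Sbar] [Fintype S] [Nonempty Sbar] [Nonempty S]
    [DecidableEq Sbar] [DecidableEq S]
    (A : Matrix Sbar Sbar ℂ) (B : Matrix Sbar S ℂ) (C : Matrix S Sbar ℂ) (D : Matrix S S ℂ)
    (l0 : ℂ) (hA : IsUnit (A - l0 • (1 : Matrix Sbar Sbar ℂ))) :
    Module.finrank ℂ (LinearMap.ker (fromBlocks A B C D - l0 • 1).mulVecLin)
      = Module.finrank ℂ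
        (LinearMap.ker (D - C * (A - l0 • (1 : Matrix Sbar Sbar ℂ))⁻¹ * B - l0 • 1).mulVecLin) := by
  set A' := A - l0 • (1 : Matrix Sbar Sbar ℂ) with hA'def
  set R' := D - C * A'⁻¹ * B - l0 • (1 : Matrix S S ℂ) with hR'def
  have hdet : IsUnit A'.det := (Matrix.isUnit_iff_isUnit_det _).mp hA
  have hinv : A'⁻¹ * A' = 1 := Matrix.nonsing_inv_mul _ hdet
  have hinv' : A' * A'⁻¹ = 1 := Matrix.mul_nonsing_inv _ hdet
  have hM : fromBlocks A B C D - l0 • (1 : Matrix (Sbar ⊕ S) (Sbar ⊕ S) ℂ)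
      = fromBlocks A' B C (D - l0 • 1) := by
    ext (i | i) (j | j) <;>
      simp [hA'def, Matrix.one_apply, Matrix.sub_apply, Matrix.smul_apply]
  have hRv : ∀ y : S → ℂ, R' *ᵥ y = (D - l0 • 1) *ᵥ y - (C * A'⁻¹ * B) *ᵥ y := by
    intro y
    rw [hR'def]
    simp only [sub_mulVec]
    abel
  -- characterize membership in the big kernel
  have hmem : ∀ x : (Sbar ⊕ S) → ℂ,
      x ∈ LinearMap.ker (fromBlocks A B C D - l0 • 1).mulVecLin ↔
        (A' *ᵥ (x ∘ Sum.inl) + B *ᵥ (x ∘ Sum.inr) = 0 ∧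
         C *ᵥ (x ∘ Sum.inl) + (D - l0 • 1) *ᵥ (x ∘ Sum.inr) = 0) := by
    intro x
    rw [LinearMap.mem_ker, mulVecLin_apply, hM]
    nth_rewrite 1 [← Sum.elim_comp_inl_inr x]
    rw [fromBlocks_mulVec]
    constructor
    · intro h
      constructor
      · funext i; exact congrFun h (Sum.inl i)
      · funext i; exact congrFun h (Sum.inr i)
    · rintro ⟨h1, h2⟩
      funext i
      cases i with
      | inl i => exact congrFun h1 i
      | inr i => exact congrFun h2 i
  have hmem' : ∀ y : S → ℂ,
      y ∈ LinearMap.ker R'.mulVecLin ↔ (D - l0 • 1) *ᵥ y - (C * A'⁻¹ * B) *ᵥ y = 0 := by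
    intro y
    rw [LinearMap.mem_ker, mulVecLin_apply, hRv]
  -- key: on the big kernel, first component determined by second
  have hx1 : ∀ x : (Sbar ⊕ S) → ℂ,
      x ∈ LinearMap.ker (fromBlocks A B C D - l0 • 1).mulVecLin →
        x ∘ Sum.inl = -((A'⁻¹ * B) *ᵥ (x ∘ Sum.inr)) := by
    intro x hx
    obtain ⟨h1, h2⟩ := (hmem x).mp hx
    have : A' *ᵥ (x ∘ Sum.inl) = -(B *ᵥ (x ∘ Sum.inr)) := by
      rw [eq_neg_iff_add_eq_zero]; exact h1
    calc x ∘ Sum.inl = (A'⁻¹ * A') *ᵥ (x ∘ Sum.inl) := by rw [hinv, one_mulVec]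
      _ = A'⁻¹ *ᵥ (A' *ᵥ (x ∘ Sum.inl)) := (mulVec_mulVec _ _ _).symm
      _ = A'⁻¹ *ᵥ (-(B *ᵥ (x ∘ Sum.inr))) := by rw [this]
      _ = -((A'⁻¹ * B) *ᵥ (x ∘ Sum.inr)) := by rw [mulVec_neg, mulVec_mulVec]
  have himg : ∀ x : (Sbar ⊕ S) → ℂ,
      x ∈ LinearMap.ker (fromBlocks A B C D - l0 • 1).mulVecLin →
        (x ∘ Sum.inr) ∈ LinearMap.ker R'.mulVecLin := by
    intro x hx
    obtain ⟨h1, h2⟩ := (hmem x).mp hx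
    rw [hx1 x hx] at h2
    rw [mulVec_neg, mulVec_mulVec, ← Matrix.mul_assoc, neg_add_eq_zero] at h2
    rw [hmem', ← h2, sub_self]
  have hpre : ∀ y : S → ℂ, y ∈ LinearMap.ker R'.mulVecLin →
      Sum.elim (-((A'⁻¹ * B) *ᵥ y)) y ∈
        LinearMap.ker (fromBlocks A B C D - l0 • 1).mulVecLin := by
    intro y hy
    rw [hmem'] at hy
    rw [hmem]
    refine ⟨?_, ?_⟩
    · simp only [Sum.elim_comp_inl, Sum.elim_comp_inr]
      rw [mulVec_neg, mulVec_mulVec, ← Matrix.mul_assoc, hinv', Matrix.one_mul, neg_add_cancel]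
    · simp only [Sum.elim_comp_inl, Sum.elim_comp_inr]
      rw [mulVec_neg, mulVec_mulVec, ← Matrix.mul_assoc, neg_add_eq_zero]
      rw [sub_eq_zero] at hy
      exact hy.symm
  apply LinearEquiv.finrank_eq
  refine
    { toFun := fun x => ⟨x.1 ∘ Sum.inr, himg x.1 x.2⟩
      invFun := fun y => ⟨Sum.elim (-((A'⁻¹ * B) *ᵥ y.1)) y.1, hpre y.1 y.2⟩
      map_add' := fun x y => rfl
      map_smul' := fun c x => rfl
      left_inv := ?_
      right_inv := fun y => rfl }
  rintro ⟨x, hx⟩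
  ext i
  cases i with
  | inl i =>
    have := hx1 x hx
    simpa using (congrFun this i).symm
  | inr i => rfl
end

section
/- Suppose S̄ consists of a single index j, so that A is the 1×1 matrix with entry a = M(j,j), and assume a ≠ λ₀. Let u, v ∈ ℂ^{{j}⊕S} satisfy M u = λ₀ u and (M − λ₀I) v = u, and assume u_j ≠ 0. Then there exists c ∈ ℂ with (R(λ₀) − λ₀I) v_S = c · u_S if and only if there exists c' ∈ ℂ such that M(i,j) = c' · u_i for every i ∈ S; that is, the generalized eigenvector is preserved under removal of the single vertex j if and only if the column of M from j to S is a scalar multiple of u_S. -/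
open Matrix

/-- Removal of a single vertex `j`: with `a = M(j,j) ≠ l0`, `M u = l0 u`, `(M - l0 I) v = u`
and `u_j ≠ 0`, the generalized eigenvector is preserved (i.e. `(R(l0) - l0 I) v_S = c u_S`
for some `c`) iff the column `(M(i,j))_{i ∈ S}` is a scalar multiple of `u_S`. -/
theorem generalized_eigenvector_preserved_single_vertex
    {S : Type*} [Fintype S] [Nonempty S] [DecidableEq S]
    (A : Matrix Unit Unit ℂ) (B : Matrix Unit S ℂ) (C : Matrix S Unit ℂ) (D : Matrix S S ℂ)
    (l0 : ℂ) (ha : A Unit.unit Unit.unit ≠ l0)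
    (u v : Unit ⊕ S → ℂ)
    (hu : (fromBlocks A B C D).mulVec u = l0 • u)
    (hv : (fromBlocks A B C D - l0 • 1).mulVec v = u)
    (huj : u (Sum.inl Unit.unit) ≠ 0) :
    (∃ c : ℂ,
      (D - C * (A - l0 • (1 : Matrix Unit Unit ℂ))⁻¹ * B - l0 • 1).mulVec (v ∘ Sum.inr)
        = c • (u ∘ Sum.inr)) ↔
    (∃ c' : ℂ, ∀ i : S, C i Unit.unit = c' * u (Sum.inr i)) := by
  have hα0 : A Unit.unit Unit.unit - l0 ≠ 0 := sub_ne_zero.mpr ha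
  have hαinv : (A Unit.unit Unit.unit - l0)⁻¹ * (A Unit.unit Unit.unit - l0) = 1 :=
    inv_mul_cancel₀ hα0
  have hu0inv : (u (Sum.inl Unit.unit))⁻¹ * u (Sum.inl Unit.unit) = 1 := inv_mul_cancel₀ huj
  have hinv : (A - l0 • (1 : Matrix Unit Unit ℂ))⁻¹
      = (A Unit.unit Unit.unit - l0)⁻¹ • (1 : Matrix Unit Unit ℂ) := by
    rw [Matrix.inv_def, Matrix.adjugate_subsingleton, Matrix.det_unique]
    simp [Ring.inverse_eq_inv', Matrix.sub_apply, Matrix.smul_apply, Matrix.one_apply_eq]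
  -- componentwise equations
  have hv1 : A Unit.unit Unit.unit * v (Sum.inl Unit.unit)
      + (∑ k, B Unit.unit k * v (Sum.inr k)) - l0 * v (Sum.inl Unit.unit)
      = u (Sum.inl Unit.unit) := by
    have := congrFun hv (Sum.inl Unit.unit)
    simpa [Matrix.mulVec, dotProduct, Matrix.fromBlocks, Fintype.sum_sum_type,
      Matrix.sub_apply, Matrix.smul_apply, Matrix.one_apply, sub_mul] using this
  have hv2 : ∀ i : S, C i Unit.unit * v (Sum.inl Unit.unit)
      + (∑ k, D i k * v (Sum.inr k)) - l0 * v (Sum.inr i) = u (Sum.inr i) := by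
    intro i
    have := congrFun hv (Sum.inr i)
    simpa [Matrix.mulVec, dotProduct, Matrix.fromBlocks, Fintype.sum_sum_type,
      Matrix.sub_apply, Matrix.smul_apply, Matrix.one_apply, Finset.sum_sub_distrib,
      sub_mul] using this
  have key : ∀ i : S,
      ((D - C * (A - l0 • (1 : Matrix Unit Unit ℂ))⁻¹ * B - l0 • 1).mulVec (v ∘ Sum.inr)) i
        = u (Sum.inr i)
          - (A Unit.unit Unit.unit - l0)⁻¹ * u (Sum.inl Unit.unit) * C i Unit.unit := by
    intro i
    have expand : ((D - C * (A - l0 • (1 : Matrix Unit Unit ℂ))⁻¹ * B - l0 • 1).mulVec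
        (v ∘ Sum.inr)) i
        = (∑ k, D i k * v (Sum.inr k))
          - (A Unit.unit Unit.unit - l0)⁻¹ * C i Unit.unit
              * (∑ k, B Unit.unit k * v (Sum.inr k))
          - l0 * v (Sum.inr i) := by
      simp [hinv, Matrix.mulVec, dotProduct, Matrix.sub_apply, Matrix.mul_apply,
        Matrix.smul_apply, Matrix.one_apply, Finset.sum_sub_distrib, sub_mul,
        Finset.mul_sum, mul_assoc, mul_comm, mul_left_comm]
    rw [expand]
    linear_combination hv2 i
      - (A Unit.unit Unit.unit - l0)⁻¹ * C i Unit.unit * hv1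
      + C i Unit.unit * v (Sum.inl Unit.unit) * hαinv
  constructor
  · rintro ⟨c, hc⟩
    refine ⟨(1 - c) * (A Unit.unit Unit.unit - l0) * (u (Sum.inl Unit.unit))⁻¹, fun i => ?_⟩
    have h := congrFun hc i
    rw [key i] at h
    simp only [Pi.smul_apply, Function.comp_apply, smul_eq_mul] at h
    linear_combination (-(A Unit.unit Unit.unit - l0) * (u (Sum.inl Unit.unit))⁻¹) * h
      - C i Unit.unit * (u (Sum.inl Unit.unit))⁻¹ * u (Sum.inl Unit.unit) * hαinv
      - C i Unit.unit * hu0inv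
  · rintro ⟨c', hc'⟩
    refine ⟨1 - (A Unit.unit Unit.unit - l0)⁻¹ * u (Sum.inl Unit.unit) * c', ?_⟩
    funext i
    rw [key i]
    simp only [Pi.smul_apply, Function.comp_apply, smul_eq_mul]
    rw [hc' i]
    ring
end

section
/- Suppose the block A = M_{S̄S̄} is a diagonal matrix with diagonal entries d_l satisfying d_l ≠ λ₀ for every l ∈ S̄ (i.e. there are no edges between distinct vertices of S̄). Let u, v ∈ ℂ^{S̄⊕S} satisfy M u = λ₀ u and (M − λ₀I) v = u, and suppose there exists c ∈ ℂ with c ≠ −1 such that for every i ∈ S, Σ_{l∈S̄} M(i,l) · u_l / (λ₀ − d_l) = c · u_i. Then (R(λ₀) − λ₀I) v_S = (1 + c) · u_S, i.e. the generalized eigenvector is preserved under the isospectral reduction. -/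
open Matrix

/-- If `A = M_{S̄ S̄}` is diagonal with diagonal entries `d l ≠ l0` (no edges between distinct
vertices of `S̄`), `M u = l0 u`, `(M - l0 I) v = u`, `c ≠ -1` and
`∑_{l ∈ S̄} M(i,l) u_l / (l0 - d l) = c u_i` for all `i ∈ S`, then
`(R(l0) - l0 I) v_S = (1 + c) u_S`. -/
theorem generalized_eigenvector_preserved_of_diagonal_block
    {Sbar S : Type*} [Fintype Sbar] [Fintype S] [Nonempty Sbar] [Nonempty S]
    [DecidableEq Sbar] [DecidableEq S]
    (d : Sbar → ℂ) (B : Matrix Sbar S ℂ) (C : Matrix S Sbar ℂ) (D : Matrix S S ℂ)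
    (l0 : ℂ) (hd : ∀ l : Sbar, d l ≠ l0)
    (u v : Sbar ⊕ S → ℂ)
    (hu : (fromBlocks (Matrix.diagonal d) B C D).mulVec u = l0 • u)
    (hv : (fromBlocks (Matrix.diagonal d) B C D - l0 • 1).mulVec v = u)
    (c : ℂ) (hc : c ≠ -1)
    (hsum : ∀ i : S, ∑ l : Sbar, C i l * u (Sum.inl l) / (l0 - d l) = c * u (Sum.inr i)) :
    (D - C * (Matrix.diagonal d - l0 • (1 : Matrix Sbar Sbar ℂ))⁻¹ * B - l0 • 1).mulVec
        (v ∘ Sum.inr)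
      = (1 + c) • (u ∘ Sum.inr) := by
  have hne : ∀ l, d l - l0 ≠ 0 := fun l => sub_ne_zero.mpr (hd l)
  have hE : (Matrix.diagonal d - l0 • (1 : Matrix Sbar Sbar ℂ))⁻¹
      = Matrix.diagonal (fun l => (d l - l0)⁻¹) := by
    have h1 : Matrix.diagonal d - l0 • (1 : Matrix Sbar Sbar ℂ)
        = Matrix.diagonal (fun l => d l - l0) := by
      ext i j
      by_cases h : i = j <;> simp [Matrix.one_apply, h]
    rw [h1]
    apply Matrix.inv_eq_right_inv
    rw [Matrix.diagonal_mul_diagonal]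
    simp only [mul_inv_cancel₀ (hne _)]
    exact Matrix.diagonal_one
  -- pointwise consequences of hv
  have hv1 : ∀ l : Sbar, (∑ j, B l j * v (Sum.inr j))
      = u (Sum.inl l) + (l0 - d l) * v (Sum.inl l) := by
    intro l
    have h := congrFun hv (Sum.inl l)
    simp [Matrix.mulVec, dotProduct, Matrix.sub_apply, Matrix.smul_apply,
      Matrix.one_apply, Fintype.sum_sum_type, Matrix.diagonal_apply, Finset.sum_ite_eq,
      Finset.sum_sub_distrib, mul_ite, ite_mul, sub_mul] at h
    linear_combination h
  have hv2 : ∀ i : S, (∑ l, C i l * v (Sum.inl l)) + (∑ j, D i j * v (Sum.inr j))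
      - l0 * v (Sum.inr i) = u (Sum.inr i) := by
    intro i
    have h := congrFun hv (Sum.inr i)
    simp [Matrix.mulVec, dotProduct, Matrix.sub_apply, Matrix.smul_apply,
      Matrix.one_apply, Fintype.sum_sum_type, Finset.sum_sub_distrib, mul_ite, ite_mul,
      sub_mul] at h
    linear_combination h
  rw [hE]
  funext i
  simp only [Matrix.mulVec, dotProduct, Matrix.sub_apply, Matrix.smul_apply,
    Matrix.one_apply, Matrix.mul_apply, Matrix.diagonal_apply, Pi.smul_apply,
    Function.comp_apply, smul_eq_mul, mul_ite, ite_mul, zero_mul, mul_zero,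
    Finset.sum_ite_eq, Finset.sum_ite_eq', Finset.mem_univ, if_true, mul_one, sub_mul,
    Finset.sum_sub_distrib]
  have hswap : ∑ j, (∑ l, C i l * (d l - l0)⁻¹ * B l j) * v (Sum.inr j)
      = ∑ l, C i l * (d l - l0)⁻¹ * (u (Sum.inl l) + (l0 - d l) * v (Sum.inl l)) := by
    simp_rw [Finset.sum_mul]
    rw [Finset.sum_comm]
    refine Finset.sum_congr rfl fun l _ => ?_
    rw [← hv1 l, Finset.mul_sum]
    refine Finset.sum_congr rfl fun j _ => ?_
    ring
  rw [hswap]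
  have hsplit : ∑ l, C i l * (d l - l0)⁻¹ * (u (Sum.inl l) + (l0 - d l) * v (Sum.inl l))
      = -(c * u (Sum.inr i)) - ∑ l, C i l * v (Sum.inl l) := by
    rw [← hsum i, ← Finset.sum_neg_distrib, ← Finset.sum_sub_distrib]
    refine Finset.sum_congr rfl fun l _ => ?_
    have h0 := hne l
    have h1 : l0 - d l ≠ 0 := fun h => h0 (by linear_combination -h)
    field_simp
    ring
  rw [hsplit]
  have := hv2 i
  push_cast
  ring_nf
  linear_combination (1 : ℂ) * this
end

section
/- Let u ∈ ℂ^{S̄⊕S} be given and let v_S ∈ ℂ^S satisfy (R(λ₀) − λ₀I) v_S = u_S − C (A − λ₀I)⁻¹ u_{S̄}. Define v_{S̄} := (A − λ₀I)⁻¹ (u_{S̄} − B v_S) and let v ∈ ℂ^{S̄⊕S} be the vector with these S̄- and S-parts. Then (M − λ₀I) v = u; that is, a generalized eigenvector of the reduced matrix can be uniquely extended (reconstructed) to a generalized eigenvector of the original matrix. -/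
open Matrix

/-- Reconstruction: if `(R(l0) - l0 I) v_S = u_S - C (A - l0 I)⁻¹ u_{S̄}` and we set
`v_{S̄} := (A - l0 I)⁻¹ (u_{S̄} - B v_S)`, then the vector `v` with these parts satisfies
`(M - l0 I) v = u`. -/
theorem reconstruction_of_generalized_eigenvector
    {Sbar S : Type*} [Fintype Sbar] [Fintype S] [Nonempty Sbar] [Nonempty S]
    [DecidableEq Sbar] [DecidableEq S]
    (A : Matrix Sbar Sbar ℂ) (B : Matrix Sbar S ℂ) (C : Matrix S Sbar ℂ) (D : Matrix S S ℂ)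
    (l0 : ℂ) (hA : IsUnit (A - l0 • (1 : Matrix Sbar Sbar ℂ)))
    (u : Sbar ⊕ S → ℂ) (vS : S → ℂ)
    (hvS : (D - C * (A - l0 • (1 : Matrix Sbar Sbar ℂ))⁻¹ * B - l0 • 1).mulVec vS
      = (u ∘ Sum.inr)
        - (C * (A - l0 • (1 : Matrix Sbar Sbar ℂ))⁻¹).mulVec (u ∘ Sum.inl)) :
    (fromBlocks A B C D - l0 • 1).mulVec
        (Sum.elim
          ((A - l0 • (1 : Matrix Sbar Sbar ℂ))⁻¹.mulVec ((u ∘ Sum.inl) - B.mulVec vS))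
          vS)
      = u := by
  set E := A - l0 • (1 : Matrix Sbar Sbar ℂ) with hE
  have hEE : E * E⁻¹ = 1 :=
    mul_nonsing_inv E ((Matrix.isUnit_iff_isUnit_det E).mp hA)
  have hblock : fromBlocks A B C D - l0 • 1
      = fromBlocks E B C (D - l0 • 1) := by
    ext (i | i) (j | j) <;>
      simp [hE, Matrix.one_apply, Matrix.sub_apply, Matrix.smul_apply]
  rw [hblock]
  ext (i | i)
  · have : E.mulVec (E⁻¹.mulVec ((u ∘ Sum.inl) - B.mulVec vS))
        = (u ∘ Sum.inl) - B.mulVec vS := by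
      rw [mulVec_mulVec, hEE, one_mulVec]
    simp [fromBlocks_mulVec, this]
  · have h2 := congrFun hvS i
    simp only [Matrix.sub_mulVec, Pi.sub_apply, Matrix.smul_mulVec, one_mulVec,
      Pi.smul_apply, ← mulVec_mulVec] at h2 ⊢
    simp only [fromBlocks_mulVec, Sum.elim_inr, Pi.add_apply, Matrix.mulVec_sub]
    have h3 := congrFun (Matrix.mulVec_sub C (E⁻¹.mulVec (u ∘ Sum.inl)) (E⁻¹.mulVec (B.mulVec vS))) i
    simp only [Sum.elim_comp_inl, Sum.elim_comp_inr, Matrix.sub_mulVec,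
      Matrix.smul_mulVec, one_mulVec, Pi.sub_apply, Pi.smul_apply,
      smul_eq_mul, Function.comp_apply] at h2 h3 ⊢
    linear_combination h2 + h3
end

section
/- Let M₁ be a complex matrix indexed by S̄₁ ⊕ S with blocks A₁, B₁, C₁, D₁, and M₂ a complex matrix indexed by S̄₂ ⊕ S with blocks A₂, B₂, C₂, D₂. Suppose their isospectral reductions to S coincide as matrices over RatFunc ℂ: D₁ − C₁(A₁ − X·I)⁻¹B₁ = D₂ − C₂(A₂ − X·I)⁻¹B₂. Suppose moreover that for each i = 1, 2 no complex number λ is simultaneously a root of det(Mᵢ − λI) and of det(Aᵢ − λI) (i.e. σ(Mᵢ) ∩ σ(M_{S̄ᵢS̄ᵢ}) = ∅). Then det(M₁ − X·I) = det(M₂ − X·I) as polynomials; in particular M₁ and M₂ have the same eigenvalues with the same algebraic multiplicities. -/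
/-!
For `M = fromBlocks A B C D` with isospectral reduction `R(X) = D - C (A - X)⁻¹ B`, the Schur
complement formula gives `det (M - X) = det (A - X) * det (R(X) - X)` over `RatFunc F`.
Equal reductions hence give `p₁ q₂ = p₂ q₁` for `pᵢ = det (Mᵢ - X)` and `qᵢ = det (Aᵢ - X)`.
If `pᵢ` and `qᵢ` have no common root they are coprime, so `p₁ ∣ p₂ ∣ p₁`; and two associated
polynomials of the form `det (M - X) = ± charpoly M` are equal, since charpolys are monic and
their degree fixes the sign.
-/

open Matrix Polynomial

section BlockDeterminant

variable {K m n : Type*} [CommRing K] [Fintype m] [Fintype n] [DecidableEq m] [DecidableEq n]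

theorem Matrix.det_fromBlocks_sub_smul_one (A : Matrix m m K) (B : Matrix m n K)
    (C : Matrix n m K) (D : Matrix n n K) (x : K) (hA : IsUnit (A - x • 1).det) :
    (fromBlocks A B C D - x • 1).det
      = (A - x • 1).det * (D - C * (A - x • 1)⁻¹ * B - x • 1).det := by
  let := invertibleOfIsUnitDet _ hA
  have hblocks : fromBlocks A B C D - x • 1 = fromBlocks (A - x • 1) B C (D - x • 1) := by
    rw [← fromBlocks_one, fromBlocks_smul, sub_eq_add_neg, fromBlocks_neg, fromBlocks_add]
    simp [sub_eq_add_neg]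
  rw [hblocks, det_fromBlocks₁₁, invOf_eq_nonsing_inv, sub_right_comm]

end BlockDeterminant

section

variable {R S m n : Type*} [CommRing R] [CommRing S] [Fintype m] [Fintype n]
  [DecidableEq m] [DecidableEq n]

theorem RingHom.map_det_map_C_sub_X_smul_one (f : R[X] →+* S) (M : Matrix n n R) :
    f (M.map C - (X : R[X]) • 1).det = (M.map (f.comp C) - f X • 1).det := by
  rw [RingHom.map_det, RingHom.mapMatrix_apply]
  congr 1
  ext i j
  by_cases h : i = j <;> simp [h, one_apply]

theorem Matrix.det_map_C_sub_X_smul_one (M : Matrix n n R) :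
    (M.map C - (X : R[X]) • 1).det = (-1) ^ Fintype.card n * M.charpoly := by
  have : M.map C - (X : R[X]) • 1 = -charmatrix M := by
    ext i j
    by_cases h : i = j <;> simp [h]
  rw [this, det_neg, charpoly]

theorem Matrix.eval_det_map_C_sub_X_smul_one (M : Matrix n n R) (l : R) :
    (M.map C - (X : R[X]) • 1).det.eval l = (M - l • 1).det := by
  simpa [Function.comp_def] using (evalRingHom l).map_det_map_C_sub_X_smul_one M

theorem Matrix.det_map_C_sub_X_smul_one_eq_of_associated [Nontrivial R]
    {M : Matrix m m R} {N : Matrix n n R}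
    (h : Associated (M.map C - (X : R[X]) • 1).det (N.map C - (X : R[X]) • 1).det) :
    (M.map C - (X : R[X]) • 1).det = (N.map C - (X : R[X]) • 1).det := by
  rw [det_map_C_sub_X_smul_one, det_map_C_sub_X_smul_one] at h ⊢
  rw [associated_isUnit_mul_left_iff (isUnit_neg_one.pow _),
    associated_isUnit_mul_right_iff (isUnit_neg_one.pow _)] at h
  have hχ : M.charpoly = N.charpoly :=
    eq_of_monic_of_associated M.charpoly_monic N.charpoly_monic h
  have hcard : Fintype.card m = Fintype.card n := by simpa using congrArg natDegree hχ
  rw [hχ, hcard]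

end

section

variable {F m n : Type*} [Field F] [Fintype m] [Fintype n] [DecidableEq m] [DecidableEq n]

noncomputable def Matrix.isospectralReduction (A : Matrix m m F) (B : Matrix m n F)
    (C : Matrix n m F) (D : Matrix n n F) : Matrix n n (RatFunc F) :=
  D.map RatFunc.C
    - C.map RatFunc.C * (A.map RatFunc.C - (RatFunc.X : RatFunc F) • 1)⁻¹ * B.map RatFunc.C

theorem Matrix.algebraMap_det_map_C_sub_X_smul_one (M : Matrix n n F) :
    algebraMap F[X] (RatFunc F) (M.map C - (X : F[X]) • 1).det
      = (M.map RatFunc.C - (RatFunc.X : RatFunc F) • 1).det := by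
  rw [RingHom.map_det_map_C_sub_X_smul_one, RatFunc.algebraMap_X]
  rfl

theorem Matrix.algebraMap_det_fromBlocks_map_C_sub_X_smul_one (A : Matrix m m F)
    (B : Matrix m n F) (C : Matrix n m F) (D : Matrix n n F) :
    algebraMap F[X] (RatFunc F) ((fromBlocks A B C D).map Polynomial.C - (X : F[X]) • 1).det
      = algebraMap F[X] (RatFunc F) (A.map Polynomial.C - (X : F[X]) • 1).det
        * (isospectralReduction A B C D - (RatFunc.X : RatFunc F) • 1).det := by
  have hA : IsUnit (A.map RatFunc.C - (RatFunc.X : RatFunc F) • 1).det := by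
    rw [← algebraMap_det_map_C_sub_X_smul_one, isUnit_iff_ne_zero,
      map_ne_zero_iff _ (RatFunc.algebraMap_injective F), det_map_C_sub_X_smul_one]
    exact mul_ne_zero (pow_ne_zero _ (neg_ne_zero.2 one_ne_zero)) A.charpoly_monic.ne_zero
  rw [algebraMap_det_map_C_sub_X_smul_one, algebraMap_det_map_C_sub_X_smul_one, fromBlocks_map,
    det_fromBlocks_sub_smul_one _ _ _ _ _ hA]
  rfl

theorem Matrix.isCoprime_det_map_C_sub_X_smul_one [IsAlgClosed F] {M : Matrix m m F}
    {N : Matrix n n F} (h : ∀ l : F, ¬((M - l • 1).det = 0 ∧ (N - l • 1).det = 0)) :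
    IsCoprime (M.map C - (X : F[X]) • 1).det (N.map C - (X : F[X]) • 1).det := by
  refine (isCoprime_iff_aeval_ne_zero_of_isAlgClosed F F _ _).2 fun l => ?_
  simpa only [coe_aeval_eq_eval, eval_det_map_C_sub_X_smul_one, ← not_and_or] using h l

theorem Matrix.det_fromBlocks_map_C_sub_X_smul_one_eq_of_isospectralReduction_eq
    {S T₁ T₂ : Type*} [Fintype S] [Fintype T₁] [Fintype T₂]
    [DecidableEq S] [DecidableEq T₁] [DecidableEq T₂]
    {A₁ : Matrix T₁ T₁ F} {B₁ : Matrix T₁ S F} {C₁ : Matrix S T₁ F} {D₁ : Matrix S S F}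
    {A₂ : Matrix T₂ T₂ F} {B₂ : Matrix T₂ S F} {C₂ : Matrix S T₂ F} {D₂ : Matrix S S F}
    (hR : isospectralReduction A₁ B₁ C₁ D₁ = isospectralReduction A₂ B₂ C₂ D₂)
    (h₁ : IsCoprime ((fromBlocks A₁ B₁ C₁ D₁).map C - (X : F[X]) • 1).det
      (A₁.map C - (X : F[X]) • 1).det)
    (h₂ : IsCoprime ((fromBlocks A₂ B₂ C₂ D₂).map C - (X : F[X]) • 1).det
      (A₂.map C - (X : F[X]) • 1).det) :
    ((fromBlocks A₁ B₁ C₁ D₁).map C - (X : F[X]) • 1).det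
      = ((fromBlocks A₂ B₂ C₂ D₂).map C - (X : F[X]) • 1).det := by
  have cross :
      ((fromBlocks A₁ B₁ C₁ D₁).map C - (X : F[X]) • 1).det * (A₂.map C - (X : F[X]) • 1).det
        = ((fromBlocks A₂ B₂ C₂ D₂).map C - (X : F[X]) • 1).det
          * (A₁.map C - (X : F[X]) • 1).det := by
    refine RatFunc.algebraMap_injective F ?_
    rw [map_mul, map_mul, algebraMap_det_fromBlocks_map_C_sub_X_smul_one,
      algebraMap_det_fromBlocks_map_C_sub_X_smul_one, hR]
    ring
  exact det_map_C_sub_X_smul_one_eq_of_associated <| associated_of_dvd_dvd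
    (h₁.dvd_of_dvd_mul_right ⟨_, cross.symm⟩) (h₂.dvd_of_dvd_mul_right ⟨_, cross⟩)

end

theorem spectrally_equivalent_same_charpoly_general
    {S Sbar1 Sbar2 : Type*} [Fintype S] [Fintype Sbar1] [Fintype Sbar2]
    [DecidableEq S] [DecidableEq Sbar1] [DecidableEq Sbar2]
    (A₁ : Matrix Sbar1 Sbar1 ℂ) (B₁ : Matrix Sbar1 S ℂ) (C₁ : Matrix S Sbar1 ℂ)
    (D₁ : Matrix S S ℂ)
    (A₂ : Matrix Sbar2 Sbar2 ℂ) (B₂ : Matrix Sbar2 S ℂ) (C₂ : Matrix S Sbar2 ℂ)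
    (D₂ : Matrix S S ℂ)
    (hR : D₁.map (RatFunc.C : ℂ →+* RatFunc ℂ)
        - C₁.map (RatFunc.C : ℂ →+* RatFunc ℂ)
          * (A₁.map (RatFunc.C : ℂ →+* RatFunc ℂ)
              - (RatFunc.X : RatFunc ℂ) • (1 : Matrix Sbar1 Sbar1 (RatFunc ℂ)))⁻¹
          * B₁.map (RatFunc.C : ℂ →+* RatFunc ℂ)
      = D₂.map (RatFunc.C : ℂ →+* RatFunc ℂ)
        - C₂.map (RatFunc.C : ℂ →+* RatFunc ℂ)
          * (A₂.map (RatFunc.C : ℂ →+* RatFunc ℂ)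
              - (RatFunc.X : RatFunc ℂ) • (1 : Matrix Sbar2 Sbar2 (RatFunc ℂ)))⁻¹
          * B₂.map (RatFunc.C : ℂ →+* RatFunc ℂ))
    (h1 : ∀ l : ℂ,
      ¬((fromBlocks A₁ B₁ C₁ D₁ - l • 1).det = 0 ∧ (A₁ - l • 1).det = 0))
    (h2 : ∀ l : ℂ,
      ¬((fromBlocks A₂ B₂ C₂ D₂ - l • 1).det = 0 ∧ (A₂ - l • 1).det = 0)) :
    ((fromBlocks A₁ B₁ C₁ D₁).map (Polynomial.C : ℂ →+* Polynomial ℂ)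
        - (Polynomial.X : Polynomial ℂ)
          • (1 : Matrix (Sbar1 ⊕ S) (Sbar1 ⊕ S) (Polynomial ℂ))).det
      = ((fromBlocks A₂ B₂ C₂ D₂).map (Polynomial.C : ℂ →+* Polynomial ℂ)
        - (Polynomial.X : Polynomial ℂ)
          • (1 : Matrix (Sbar2 ⊕ S) (Sbar2 ⊕ S) (Polynomial ℂ))).det :=
  det_fromBlocks_map_C_sub_X_smul_one_eq_of_isospectralReduction_eq hR
    (isCoprime_det_map_C_sub_X_smul_one h1) (isCoprime_det_map_C_sub_X_smul_one h2)

/-- Spectrally equivalent matrices whose spectra are disjoint from those of their removed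
blocks have the same characteristic polynomial: if the isospectral reductions of `M₁` and
`M₂` to `S` coincide over `RatFunc ℂ` and `σ(Mᵢ) ∩ σ(Aᵢ) = ∅` for `i = 1, 2`, then
`det(M₁ - X I) = det(M₂ - X I)` as polynomials. -/
theorem spectrally_equivalent_same_charpoly
    {S Sbar1 Sbar2 : Type*} [Fintype S] [Fintype Sbar1] [Fintype Sbar2]
    [Nonempty S] [Nonempty Sbar1] [Nonempty Sbar2]
    [DecidableEq S] [DecidableEq Sbar1] [DecidableEq Sbar2]
    (A₁ : Matrix Sbar1 Sbar1 ℂ) (B₁ : Matrix Sbar1 S ℂ) (C₁ : Matrix S Sbar1 ℂ)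
    (D₁ : Matrix S S ℂ)
    (A₂ : Matrix Sbar2 Sbar2 ℂ) (B₂ : Matrix Sbar2 S ℂ) (C₂ : Matrix S Sbar2 ℂ)
    (D₂ : Matrix S S ℂ)
    (hR : D₁.map (RatFunc.C : ℂ →+* RatFunc ℂ)
        - C₁.map (RatFunc.C : ℂ →+* RatFunc ℂ)
          * (A₁.map (RatFunc.C : ℂ →+* RatFunc ℂ)
              - (RatFunc.X : RatFunc ℂ) • (1 : Matrix Sbar1 Sbar1 (RatFunc ℂ)))⁻¹
          * B₁.map (RatFunc.C : ℂ →+* RatFunc ℂ)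
      = D₂.map (RatFunc.C : ℂ →+* RatFunc ℂ)
        - C₂.map (RatFunc.C : ℂ →+* RatFunc ℂ)
          * (A₂.map (RatFunc.C : ℂ →+* RatFunc ℂ)
              - (RatFunc.X : RatFunc ℂ) • (1 : Matrix Sbar2 Sbar2 (RatFunc ℂ)))⁻¹
          * B₂.map (RatFunc.C : ℂ →+* RatFunc ℂ))
    (h1 : ∀ l : ℂ,
      ¬((fromBlocks A₁ B₁ C₁ D₁ - l • 1).det = 0 ∧ (A₁ - l • 1).det = 0))
    (h2 : ∀ l : ℂ,
      ¬((fromBlocks A₂ B₂ C₂ D₂ - l • 1).det = 0 ∧ (A₂ - l • 1).det = 0)) :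
    ((fromBlocks A₁ B₁ C₁ D₁).map (Polynomial.C : ℂ →+* Polynomial ℂ)
        - (Polynomial.X : Polynomial ℂ)
          • (1 : Matrix (Sbar1 ⊕ S) (Sbar1 ⊕ S) (Polynomial ℂ))).det
      = ((fromBlocks A₂ B₂ C₂ D₂).map (Polynomial.C : ℂ →+* Polynomial ℂ)
        - (Polynomial.X : Polynomial ℂ)
          • (1 : Matrix (Sbar2 ⊕ S) (Sbar2 ⊕ S) (Polynomial ℂ))).det :=
  spectrally_equivalent_same_charpoly_general A₁ B₁ C₁ D₁ A₂ B₂ C₂ D₂ hR h1 h2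
end

section
/- Let M₁ and M₂ be complex matrices indexed by S̄₁ ⊕ S and S̄₂ ⊕ S respectively, whose isospectral reductions to S coincide as matrices over RatFunc ℂ: D₁ − C₁(A₁ − X·I)⁻¹B₁ = D₂ − C₂(A₂ − X·I)⁻¹B₂. Let λ₀ ∈ ℂ satisfy det(A₁ − λ₀I) ≠ 0 and det(A₂ − λ₀I) ≠ 0. Then the dimension over ℂ of the kernel of M₁ − λ₀I equals the dimension over ℂ of the kernel of M₂ − λ₀I, and the set of restrictions to S of eigenvectors of M₁ for λ₀ equals the set of restrictions to S of eigenvectors of M₂ for λ₀; that is, spectrally equivalent matrices have the same geometric multiplicities and the same eigenvectors on S for each such eigenvalue. -/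
open Matrix Polynomial
set_option synthInstance.maxHeartbeats 1000000
set_option maxHeartbeats 2000000

private lemma map_resolvent {n : Type*} [Fintype n] [DecidableEq n] (A : Matrix n n ℂ) :
    A.map (RatFunc.C : ℂ →+* RatFunc ℂ) - (RatFunc.X : RatFunc ℂ) • 1
      = (A.map (Polynomial.C : ℂ →+* Polynomial ℂ) - (Polynomial.X : Polynomial ℂ) • (1 : Matrix n n (Polynomial ℂ))).map
          (algebraMap (Polynomial ℂ) (RatFunc ℂ)) := by
  ext i j
  by_cases h : i = j <;>
  simp [Matrix.map_apply, Matrix.one_apply, h, RatFunc.algebraMap_C, RatFunc.algebraMap_X]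

private lemma map_smul_poly {m n : Type*} (p : Polynomial ℂ) (M : Matrix m n (Polynomial ℂ)) :
    (p • M).map (algebraMap (Polynomial ℂ) (RatFunc ℂ))
      = algebraMap (Polynomial ℂ) (RatFunc ℂ) p • M.map (algebraMap (Polynomial ℂ) (RatFunc ℂ)) := by
  ext i j; simp [Matrix.map_apply]

private lemma map_smul_eval {m n : Type*} (l0 : ℂ) (p : Polynomial ℂ) (M : Matrix m n (Polynomial ℂ)) :
    (p • M).map (Polynomial.evalRingHom l0)
      = p.eval l0 • M.map (Polynomial.evalRingHom l0) := by
  ext i j; simp [Matrix.map_apply]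

private lemma map_CC {m k : Type*} (M : Matrix m k ℂ) :
    M.map (RatFunc.C : ℂ →+* RatFunc ℂ)
      = (M.map (Polynomial.C : ℂ →+* Polynomial ℂ)).map (algebraMap (Polynomial ℂ) (RatFunc ℂ)) := by
  ext i j; simp [Matrix.map_apply, RatFunc.algebraMap_C]

private lemma map_C_eval {m k : Type*} (l0 : ℂ) (M : Matrix m k ℂ) :
    (M.map (Polynomial.C : ℂ →+* Polynomial ℂ)).map (Polynomial.evalRingHom l0) = M := by
  ext i j; simp [Matrix.map_apply]

private lemma mmap_sub {m k R S' : Type*} [Ring R] [Ring S'] (f : R →+* S')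
    (M N : Matrix m k R) : (M - N).map f = M.map f - N.map f := by
  ext i j; simp [Matrix.map_apply]

private lemma reduction_eval
    {S n1 n2 : Type*} [Fintype S] [Fintype n1] [Fintype n2]
    [DecidableEq S] [DecidableEq n1] [DecidableEq n2]
    (A₁ : Matrix n1 n1 ℂ) (B₁ : Matrix n1 S ℂ) (C₁ : Matrix S n1 ℂ) (D₁ : Matrix S S ℂ)
    (A₂ : Matrix n2 n2 ℂ) (B₂ : Matrix n2 S ℂ) (C₂ : Matrix S n2 ℂ) (D₂ : Matrix S S ℂ)
    (hR : D₁.map (RatFunc.C : ℂ →+* RatFunc ℂ)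
        - C₁.map (RatFunc.C : ℂ →+* RatFunc ℂ)
          * (A₁.map (RatFunc.C : ℂ →+* RatFunc ℂ)
              - (RatFunc.X : RatFunc ℂ) • (1 : Matrix n1 n1 (RatFunc ℂ)))⁻¹
          * B₁.map (RatFunc.C : ℂ →+* RatFunc ℂ)
      = D₂.map (RatFunc.C : ℂ →+* RatFunc ℂ)
        - C₂.map (RatFunc.C : ℂ →+* RatFunc ℂ)
          * (A₂.map (RatFunc.C : ℂ →+* RatFunc ℂ)
              - (RatFunc.X : RatFunc ℂ) • (1 : Matrix n2 n2 (RatFunc ℂ)))⁻¹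
          * B₂.map (RatFunc.C : ℂ →+* RatFunc ℂ))
    (l0 : ℂ)
    (hA1 : (A₁ - l0 • (1 : Matrix n1 n1 ℂ)).det ≠ 0)
    (hA2 : (A₂ - l0 • (1 : Matrix n2 n2 ℂ)).det ≠ 0) :
    D₁ - C₁ * (A₁ - l0 • 1)⁻¹ * B₁ = D₂ - C₂ * (A₂ - l0 • 1)⁻¹ * B₂ := by
  set φ := algebraMap (Polynomial ℂ) (RatFunc ℂ) with hφdef
  set P₁ := A₁.map (Polynomial.C : ℂ →+* Polynomial ℂ)
      - (Polynomial.X : Polynomial ℂ) • (1 : Matrix n1 n1 (Polynomial ℂ)) with hP₁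
  set P₂ := A₂.map (Polynomial.C : ℂ →+* Polynomial ℂ)
      - (Polynomial.X : Polynomial ℂ) • (1 : Matrix n2 n2 (Polynomial ℂ)) with hP₂
  have hPev1 : P₁.map (Polynomial.evalRingHom l0) = A₁ - l0 • 1 := by
    ext i j; by_cases h : i = j <;>
      simp [hP₁, Matrix.map_apply, Matrix.one_apply, h]
  have hPev2 : P₂.map (Polynomial.evalRingHom l0) = A₂ - l0 • 1 := by
    ext i j; by_cases h : i = j <;>
      simp [hP₂, Matrix.map_apply, Matrix.one_apply, h]
  have hdet1 : (Polynomial.evalRingHom l0) P₁.det = (A₁ - l0 • 1).det := by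
    rw [RingHom.map_det, RingHom.mapMatrix_apply, hPev1]
  have hdet2 : (Polynomial.evalRingHom l0) P₂.det = (A₂ - l0 • 1).det := by
    rw [RingHom.map_det, RingHom.mapMatrix_apply, hPev2]
  have hp1 : P₁.det ≠ 0 := fun h => hA1 (by rw [← hdet1, h, map_zero])
  have hp2 : P₂.det ≠ 0 := fun h => hA2 (by rw [← hdet2, h, map_zero])
  have hφinj : Function.Injective φ := RatFunc.algebraMap_injective ℂ
  have hφ1 : φ P₁.det ≠ 0 := fun h => hp1 (hφinj (by rw [h, map_zero]))
  have hφ2 : φ P₂.det ≠ 0 := fun h => hp2 (hφinj (by rw [h, map_zero]))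
  have hinv1 : (P₁.map φ)⁻¹ = (φ P₁.det)⁻¹ • (P₁.adjugate.map φ) := by
    rw [Matrix.inv_def, ← RingHom.mapMatrix_apply, ← RingHom.map_det, Ring.inverse_eq_inv',
      ← RingHom.map_adjugate, RingHom.mapMatrix_apply]
  have hinv2 : (P₂.map φ)⁻¹ = (φ P₂.det)⁻¹ • (P₂.adjugate.map φ) := by
    rw [Matrix.inv_def, ← RingHom.mapMatrix_apply, ← RingHom.map_det, Ring.inverse_eq_inv',
      ← RingHom.map_adjugate, RingHom.mapMatrix_apply]
  rw [map_resolvent A₁, map_resolvent A₂, ← hP₁, ← hP₂, ← hφdef, hinv1, hinv2,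
    map_CC D₁, map_CC D₂, map_CC C₁, map_CC C₂, map_CC B₁, map_CC B₂, ← hφdef] at hR
  set Q₁ := C₁.map (Polynomial.C : ℂ →+* Polynomial ℂ) * P₁.adjugate
      * B₁.map (Polynomial.C : ℂ →+* Polynomial ℂ) with hQ₁
  set Q₂ := C₂.map (Polynomial.C : ℂ →+* Polynomial ℂ) * P₂.adjugate
      * B₂.map (Polynomial.C : ℂ →+* Polynomial ℂ) with hQ₂
  rw [Matrix.mul_smul, Matrix.smul_mul, Matrix.mul_smul, Matrix.smul_mul] at hR
  have hQm1 : (C₁.map (Polynomial.C : ℂ →+* Polynomial ℂ)).map φ * P₁.adjugate.map φ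
      * (B₁.map (Polynomial.C : ℂ →+* Polynomial ℂ)).map φ = Q₁.map φ := by
    rw [hQ₁, Matrix.map_mul, Matrix.map_mul]
  have hQm2 : (C₂.map (Polynomial.C : ℂ →+* Polynomial ℂ)).map φ * P₂.adjugate.map φ
      * (B₂.map (Polynomial.C : ℂ →+* Polynomial ℂ)).map φ = Q₂.map φ := by
    rw [hQ₂, Matrix.map_mul, Matrix.map_mul]
  rw [hQm1, hQm2] at hR
  -- multiply by φ p₁ * φ p₂
  have key := congrArg (fun M => (φ P₁.det * φ P₂.det) • M) hR
  simp only [smul_sub, smul_smul] at key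
  rw [mul_comm (φ P₁.det) (φ P₂.det), mul_inv_cancel_right₀ hφ1,
    mul_comm (φ P₂.det) (φ P₁.det), mul_inv_cancel_right₀ hφ2] at key
  have key2 : ((P₁.det * P₂.det) • D₁.map (Polynomial.C : ℂ →+* Polynomial ℂ)
        - P₂.det • Q₁).map φ
      = ((P₁.det * P₂.det) • D₂.map (Polynomial.C : ℂ →+* Polynomial ℂ)
        - P₁.det • Q₂).map φ := by
    rw [mmap_sub, mmap_sub, map_smul_poly, map_smul_poly, map_smul_poly, map_smul_poly,
      _root_.map_mul]
    exact key
  have key3 := Matrix.map_injective hφinj key2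
  have key4 := congrArg (fun M : Matrix S S (Polynomial ℂ) => M.map (Polynomial.evalRingHom l0)) key3
  simp only [mmap_sub, map_smul_eval] at key4
  simp only [hQ₁, hQ₂, Matrix.map_mul] at key4
  rw [show P₁.adjugate.map (Polynomial.evalRingHom l0) = (P₁.map (Polynomial.evalRingHom l0)).adjugate by
      rw [← RingHom.mapMatrix_apply, ← RingHom.mapMatrix_apply, RingHom.map_adjugate],
    show P₂.adjugate.map (Polynomial.evalRingHom l0) = (P₂.map (Polynomial.evalRingHom l0)).adjugate by
      rw [← RingHom.mapMatrix_apply, ← RingHom.mapMatrix_apply, RingHom.map_adjugate]] at key4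
  simp only [hPev1, hPev2, map_C_eval, _root_.map_mul] at key4
  have hevd1 : Polynomial.eval l0 P₁.det = (A₁ - l0 • 1).det := hdet1
  have hevd2 : Polynomial.eval l0 P₂.det = (A₂ - l0 • 1).det := hdet2
  simp only [Polynomial.eval_mul] at key4
  rw [hevd1, hevd2] at key4
  set d₁ := (A₁ - l0 • (1 : Matrix n1 n1 ℂ)).det
  set d₂ := (A₂ - l0 • (1 : Matrix n2 n2 ℂ)).det
  have hadj1 : (A₁ - l0 • (1 : Matrix n1 n1 ℂ)).adjugate = d₁ • (A₁ - l0 • 1)⁻¹ := by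
    rw [Matrix.inv_def, Ring.inverse_eq_inv', smul_smul, mul_inv_cancel₀ hA1, one_smul]
  have hadj2 : (A₂ - l0 • (1 : Matrix n2 n2 ℂ)).adjugate = d₂ • (A₂ - l0 • 1)⁻¹ := by
    rw [Matrix.inv_def, Ring.inverse_eq_inv', smul_smul, mul_inv_cancel₀ hA2, one_smul]
  rw [hadj1, hadj2, Matrix.mul_smul, Matrix.smul_mul, smul_smul, Matrix.mul_smul,
    Matrix.smul_mul, smul_smul] at key4
  rw [mul_comm d₂ d₁] at key4
  have key5 : (d₁ * d₂) • (D₁ - C₁ * (A₁ - l0 • 1)⁻¹ * B₁)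
      = (d₁ * d₂) • (D₂ - C₂ * (A₂ - l0 • 1)⁻¹ * B₂) := by
    rw [smul_sub, smul_sub]
    convert key4 using 2 <;> rw [mul_comm d₁ d₂]
  exact smul_right_injective (Matrix S S ℂ) (mul_ne_zero hA1 hA2) key5
private lemma sum_fun_eq_zero_iff {n S : Type*} (u : n ⊕ S → ℂ) :
    u = 0 ↔ u ∘ Sum.inl = 0 ∧ u ∘ Sum.inr = 0 := by
  constructor
  · rintro rfl; exact ⟨rfl, rfl⟩
  · rintro ⟨h1, h2⟩; funext x
    cases x with
    | inl a => exact congrFun h1 a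
    | inr b => exact congrFun h2 b

private lemma block_kernel_iff {n S : Type*} [Fintype n] [Fintype S] [DecidableEq n]
    (E : Matrix n n ℂ) (B : Matrix n S ℂ) (C : Matrix S n ℂ) (F : Matrix S S ℂ)
    (hE : IsUnit E.det) (u : n ⊕ S → ℂ) :
    (fromBlocks E B C F).mulVec u = 0 ↔
      (u ∘ Sum.inl = -((E⁻¹ * B).mulVec (u ∘ Sum.inr)) ∧
        (F - C * E⁻¹ * B).mulVec (u ∘ Sum.inr) = 0) := by
  rw [fromBlocks_mulVec, sum_fun_eq_zero_iff]
  simp only [Sum.elim_comp_inl, Sum.elim_comp_inr]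
  constructor
  · rintro ⟨h1, h2⟩
    have hx : u ∘ Sum.inl = -((E⁻¹ * B).mulVec (u ∘ Sum.inr)) := by
      have h := congrArg (E⁻¹.mulVec) h1
      rw [Matrix.mulVec_add, Matrix.mulVec_mulVec, Matrix.mulVec_mulVec,
        Matrix.nonsing_inv_mul E hE, Matrix.one_mulVec, Matrix.mulVec_zero] at h
      exact eq_neg_of_add_eq_zero_left h
    refine ⟨hx, ?_⟩
    rw [Matrix.sub_mulVec]
    rw [hx] at h2
    rw [Matrix.mulVec_neg, Matrix.mulVec_mulVec, neg_add_eq_zero, ← Matrix.mul_assoc] at h2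
    rw [← h2, sub_self]
  · rintro ⟨hx, hw⟩
    constructor
    · rw [hx, Matrix.mulVec_neg, Matrix.mulVec_mulVec, ← Matrix.mul_assoc,
        Matrix.mul_nonsing_inv E hE, Matrix.one_mul, neg_add_cancel]
    · rw [Matrix.sub_mulVec] at hw
      rw [hx, Matrix.mulVec_neg, Matrix.mulVec_mulVec, ← Matrix.mul_assoc,
        neg_add_eq_sub]
      exact hw

private lemma block_kernel_restrict {n S : Type*} [Fintype n] [Fintype S] [DecidableEq n]
    (E : Matrix n n ℂ) (B : Matrix n S ℂ) (C : Matrix S n ℂ) (F : Matrix S S ℂ)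
    (hE : IsUnit E.det) :
    {w : S → ℂ | ∃ u : n ⊕ S → ℂ, u ≠ 0 ∧ (fromBlocks E B C F).mulVec u = 0 ∧ w = u ∘ Sum.inr}
      = {w : S → ℂ | w ≠ 0 ∧ (F - C * E⁻¹ * B).mulVec w = 0} := by
  ext w
  simp only [Set.mem_setOf_eq]
  constructor
  · rintro ⟨u, hu, hker, rfl⟩
    rw [block_kernel_iff E B C F hE] at hker
    refine ⟨?_, hker.2⟩
    intro hw0
    apply hu
    rw [sum_fun_eq_zero_iff]
    refine ⟨?_, hw0⟩
    rw [hker.1, hw0, Matrix.mulVec_zero, neg_zero]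
  · rintro ⟨hw, hker⟩
    refine ⟨Sum.elim (-((E⁻¹ * B).mulVec w)) w, ?_, ?_, rfl⟩
    · intro h0
      apply hw
      funext i
      exact congrFun h0 (Sum.inr i)
    · rw [block_kernel_iff E B C F hE]
      exact ⟨rfl, hker⟩

private lemma block_kernel_finrank {n S : Type*} [Fintype n] [Fintype S] [DecidableEq n]
    (E : Matrix n n ℂ) (B : Matrix n S ℂ) (C : Matrix S n ℂ) (F : Matrix S S ℂ)
    (hE : IsUnit E.det) :
    Module.finrank ℂ (LinearMap.ker (fromBlocks E B C F).mulVecLin)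
      = Module.finrank ℂ (LinearMap.ker (F - C * E⁻¹ * B).mulVecLin) := by
  have hmem : ∀ u : n ⊕ S → ℂ, u ∈ LinearMap.ker (fromBlocks E B C F).mulVecLin ↔
      (fromBlocks E B C F).mulVec u = 0 := fun u => Iff.rfl
  let π : (n ⊕ S → ℂ) →ₗ[ℂ] (S → ℂ) := LinearMap.funLeft ℂ ℂ Sum.inr
  have hres : ∀ u ∈ LinearMap.ker (fromBlocks E B C F).mulVecLin,
      π u ∈ LinearMap.ker (F - C * E⁻¹ * B).mulVecLin := by
    intro u hu
    rw [LinearMap.mem_ker] at hu ⊢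
    rw [Matrix.mulVecLin_apply] at hu ⊢
    exact ((block_kernel_iff E B C F hE u).mp hu).2
  let f : LinearMap.ker (fromBlocks E B C F).mulVecLin →ₗ[ℂ]
      LinearMap.ker (F - C * E⁻¹ * B).mulVecLin :=
    LinearMap.codRestrict _ (π.comp (LinearMap.ker _).subtype) fun x => hres x x.2
  have hbij : Function.Bijective f := by
    constructor
    · intro x y hxy
      ext1
      have h1 := (block_kernel_iff E B C F hE x.1).mp x.2
      have h2 := (block_kernel_iff E B C F hE y.1).mp y.2
      have hr : (x : n ⊕ S → ℂ) ∘ Sum.inr = (y : n ⊕ S → ℂ) ∘ Sum.inr :=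
        congrArg Subtype.val hxy
      funext z
      cases z with
      | inl a => rw [show (x : n ⊕ S → ℂ) (Sum.inl a) = _ from congrFun h1.1 a,
          show (y : n ⊕ S → ℂ) (Sum.inl a) = _ from congrFun h2.1 a, hr]
      | inr b => exact congrFun hr b
    · rintro ⟨w, hw⟩
      rw [LinearMap.mem_ker, Matrix.mulVecLin_apply] at hw
      refine ⟨⟨Sum.elim (-((E⁻¹ * B).mulVec w)) w, ?_⟩, rfl⟩
      rw [LinearMap.mem_ker, Matrix.mulVecLin_apply, block_kernel_iff E B C F hE]
      exact ⟨rfl, hw⟩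
  exact (LinearEquiv.ofBijective f hbij).finrank_eq

set_option synthInstance.maxHeartbeats 1000000
set_option maxHeartbeats 2000000

/-- Spectrally equivalent matrices have, at any `l0` where both reductions exist, the same
geometric multiplicity and the same set of restrictions to `S` of eigenvectors. -/
theorem spectrally_equivalent_same_geometric_multiplicity_and_eigenvectors
    {S Sbar1 Sbar2 : Type*} [Fintype S] [Fintype Sbar1] [Fintype Sbar2]
    [Nonempty S] [Nonempty Sbar1] [Nonempty Sbar2]
    [DecidableEq S] [DecidableEq Sbar1] [DecidableEq Sbar2]
    (A₁ : Matrix Sbar1 Sbar1 ℂ) (B₁ : Matrix Sbar1 S ℂ) (C₁ : Matrix S Sbar1 ℂ)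
    (D₁ : Matrix S S ℂ)
    (A₂ : Matrix Sbar2 Sbar2 ℂ) (B₂ : Matrix Sbar2 S ℂ) (C₂ : Matrix S Sbar2 ℂ)
    (D₂ : Matrix S S ℂ)
    (hR : D₁.map (RatFunc.C : ℂ →+* RatFunc ℂ)
        - C₁.map (RatFunc.C : ℂ →+* RatFunc ℂ)
          * (A₁.map (RatFunc.C : ℂ →+* RatFunc ℂ)
              - (RatFunc.X : RatFunc ℂ) • (1 : Matrix Sbar1 Sbar1 (RatFunc ℂ)))⁻¹
          * B₁.map (RatFunc.C : ℂ →+* RatFunc ℂ)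
      = D₂.map (RatFunc.C : ℂ →+* RatFunc ℂ)
        - C₂.map (RatFunc.C : ℂ →+* RatFunc ℂ)
          * (A₂.map (RatFunc.C : ℂ →+* RatFunc ℂ)
              - (RatFunc.X : RatFunc ℂ) • (1 : Matrix Sbar2 Sbar2 (RatFunc ℂ)))⁻¹
          * B₂.map (RatFunc.C : ℂ →+* RatFunc ℂ))
    (l0 : ℂ)
    (hA1 : (A₁ - l0 • (1 : Matrix Sbar1 Sbar1 ℂ)).det ≠ 0)
    (hA2 : (A₂ - l0 • (1 : Matrix Sbar2 Sbar2 ℂ)).det ≠ 0) :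
    Module.finrank ℂ (LinearMap.ker (fromBlocks A₁ B₁ C₁ D₁ - l0 • 1).mulVecLin)
      = Module.finrank ℂ (LinearMap.ker (fromBlocks A₂ B₂ C₂ D₂ - l0 • 1).mulVecLin) ∧
    {w : S → ℂ | ∃ u : Sbar1 ⊕ S → ℂ,
        u ≠ 0 ∧ (fromBlocks A₁ B₁ C₁ D₁).mulVec u = l0 • u ∧ w = u ∘ Sum.inr}
      = {w : S → ℂ | ∃ u : Sbar2 ⊕ S → ℂ,
        u ≠ 0 ∧ (fromBlocks A₂ B₂ C₂ D₂).mulVec u = l0 • u ∧ w = u ∘ Sum.inr} := by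
  have hE1 : IsUnit (A₁ - l0 • (1 : Matrix Sbar1 Sbar1 ℂ)).det := isUnit_iff_ne_zero.mpr hA1
  have hE2 : IsUnit (A₂ - l0 • (1 : Matrix Sbar2 Sbar2 ℂ)).det := isUnit_iff_ne_zero.mpr hA2
  have hred := reduction_eval A₁ B₁ C₁ D₁ A₂ B₂ C₂ D₂ hR l0 hA1 hA2
  have hkey : (D₁ - l0 • 1) - C₁ * (A₁ - l0 • 1)⁻¹ * B₁
      = (D₂ - l0 • 1) - C₂ * (A₂ - l0 • 1)⁻¹ * B₂ := by
    rw [sub_right_comm, sub_right_comm D₂]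
    exact congrArg (· - l0 • 1) hred
  have hblock1 : fromBlocks A₁ B₁ C₁ D₁ - l0 • 1
      = fromBlocks (A₁ - l0 • 1) B₁ C₁ (D₁ - l0 • 1) := by
    ext i j
    cases i <;> cases j <;>
      simp [Matrix.one_apply, Matrix.fromBlocks, Matrix.sub_apply, Matrix.smul_apply]
  have hblock2 : fromBlocks A₂ B₂ C₂ D₂ - l0 • 1
      = fromBlocks (A₂ - l0 • 1) B₂ C₂ (D₂ - l0 • 1) := by
    ext i j
    cases i <;> cases j <;>
      simp [Matrix.one_apply, Matrix.fromBlocks, Matrix.sub_apply, Matrix.smul_apply]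
  have heig1 : ∀ u : Sbar1 ⊕ S → ℂ, (fromBlocks A₁ B₁ C₁ D₁).mulVec u = l0 • u ↔
      (fromBlocks (A₁ - l0 • 1) B₁ C₁ (D₁ - l0 • 1)).mulVec u = 0 := by
    intro u
    rw [← hblock1, Matrix.sub_mulVec, Matrix.smul_mulVec, Matrix.one_mulVec, sub_eq_zero]
  have heig2 : ∀ u : Sbar2 ⊕ S → ℂ, (fromBlocks A₂ B₂ C₂ D₂).mulVec u = l0 • u ↔
      (fromBlocks (A₂ - l0 • 1) B₂ C₂ (D₂ - l0 • 1)).mulVec u = 0 := by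
    intro u
    rw [← hblock2, Matrix.sub_mulVec, Matrix.smul_mulVec, Matrix.one_mulVec, sub_eq_zero]
  constructor
  · rw [hblock1, hblock2, block_kernel_finrank _ _ _ _ hE1, block_kernel_finrank _ _ _ _ hE2,
      hkey]
  · have e1 : {w : S → ℂ | ∃ u : Sbar1 ⊕ S → ℂ,
        u ≠ 0 ∧ (fromBlocks A₁ B₁ C₁ D₁).mulVec u = l0 • u ∧ w = u ∘ Sum.inr}
        = {w : S → ℂ | ∃ u : Sbar1 ⊕ S → ℂ, u ≠ 0 ∧
            (fromBlocks (A₁ - l0 • 1) B₁ C₁ (D₁ - l0 • 1)).mulVec u = 0 ∧ w = u ∘ Sum.inr} := by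
      ext w
      exact exists_congr fun u => by rw [heig1 u]
    have e2 : {w : S → ℂ | ∃ u : Sbar2 ⊕ S → ℂ,
        u ≠ 0 ∧ (fromBlocks A₂ B₂ C₂ D₂).mulVec u = l0 • u ∧ w = u ∘ Sum.inr}
        = {w : S → ℂ | ∃ u : Sbar2 ⊕ S → ℂ, u ≠ 0 ∧
            (fromBlocks (A₂ - l0 • 1) B₂ C₂ (D₂ - l0 • 1)).mulVec u = 0 ∧ w = u ∘ Sum.inr} := by
      ext w
      exact exists_congr fun u => by rw [heig2 u]
    rw [e1, e2, block_kernel_restrict _ _ _ _ hE1, block_kernel_restrict _ _ _ _ hE2, hkey]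
end
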